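/- arXiv:1805.08873 — 7 statements merged into one kernel-verified Lean document; each statement's English description precedes it below -/
import Mathlib

section
/- Let a, b be coprime integers with 0 ≤ a < b. Then for every integer i ≥ 0 and every integer t with |t| ≤ b^i + a^{i+1}, there exist integers x_0, x_1, …, x_i with |x_j| ≤ a + b for all 0 ≤ j ≤ i and t = Σ_{j=0}^{i} x_j · a^{i−j} · b^j. -/
theorem stmt5 (a b : ℤ) (hcop : Int.gcd a b = 1) (ha : 0 ≤ a) (hab : a < b) :
    ∀ i : ℕ, ∀ t : ℤ, |t| ≤ b ^ i + a ^ (i + 1) →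
      ∃ x : ℕ → ℤ, (∀ j ≤ i, |x j| ≤ a + b) ∧
        t = ∑ j ∈ Finset.range (i + 1), x j * a ^ (i - j) * b ^ j := by
  have hb : 0 < b := lt_of_le_of_lt ha hab
  have hcop' : IsCoprime a b := Int.isCoprime_iff_gcd_eq_one.mpr hcop
  intro i
  induction i with
  | zero =>
    intro t ht
    refine ⟨fun _ => t, ?_, by simp⟩
    intro j hj
    have ht1 : |t| ≤ 1 + a := by simpa using ht
    calc |t| ≤ 1 + a := ht1
    _ ≤ a + b := by linarith
  | succ i ih =>
    intro t ht
    have hcp : IsCoprime (a ^ (i + 1)) b := hcop'.pow_left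
    obtain ⟨u, v, huv⟩ := hcp
    -- c is a solution of c * a^(i+1) ≡ t (mod b)
    set c : ℤ := t * u with hc
    have hdiv1 : b ∣ t - c * a ^ (i + 1) := by
      refine ⟨t * v, ?_⟩
      linear_combination (-t) * huv
    set lo : ℤ := if 0 ≤ t then a - b else 1 - a with hlo
    set x0 : ℤ := lo + (c - lo) % b with hx0
    have hr0 : 0 ≤ (c - lo) % b := Int.emod_nonneg _ hb.ne'
    have hr1 : (c - lo) % b < b := Int.emod_lt_of_pos _ hb
    have hx0lo : lo ≤ x0 := by simp [hx0]; linarith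
    have hx0hi : x0 ≤ lo + b - 1 := by simp only [hx0]; linarith
    have hdiv2 : b ∣ x0 - c := by
      refine ⟨-((c - lo) / b), ?_⟩
      have := Int.emod_def (c - lo) b
      simp only [hx0]
      linarith [this]
    have hdiv : b ∣ t - x0 * a ^ (i + 1) := by
      have : t - x0 * a ^ (i + 1) = (t - c * a ^ (i + 1)) - (x0 - c) * a ^ (i + 1) := by
        ring
      rw [this]
      exact dvd_sub hdiv1 (Dvd.dvd.mul_right hdiv2 _)
    set t' : ℤ := (t - x0 * a ^ (i + 1)) / b with ht'
    have hbt' : b * t' = t - x0 * a ^ (i + 1) := Int.mul_ediv_cancel' hdiv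
    have hpa : (0:ℤ) ≤ a ^ (i + 1) := pow_nonneg ha _
    have hpb : (0:ℤ) ≤ b ^ (i + 1) := pow_nonneg hb.le _
    have hta : |t| ≤ b ^ (i + 1) + a ^ (i + 2) := ht
    have habs : |t - x0 * a ^ (i + 1)| ≤ b * (b ^ i + a ^ (i + 1)) := by
      have hbb : b * (b ^ i + a ^ (i + 1)) = b ^ (i + 1) + b * a ^ (i + 1) := by
        ring
      have haa : a ^ (i + 2) = a * a ^ (i + 1) := by ring
      rw [abs_le] at hta ⊢
      obtain ⟨ht1, ht2⟩ := hta
      rw [haa] at ht1 ht2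
      by_cases hts : 0 ≤ t
      · -- lo = a - b, so a - b ≤ x0 ≤ a - 1
        rw [if_pos hts] at hlo
        rw [hlo] at hx0lo hx0hi
        constructor
        · -- lower bound: t - x0*a^(i+1) ≥ -(b^(i+1) + b*a^(i+1))
          have h1 : x0 * a ^ (i + 1) ≤ (a - 1 + b - b) * a ^ (i + 1) :=
            mul_le_mul_of_nonneg_right (by linarith) hpa
          nlinarith [mul_le_mul_of_nonneg_right hab.le hpa]
        · have h1 : (a - b) * a ^ (i + 1) ≤ x0 * a ^ (i + 1) :=
            mul_le_mul_of_nonneg_right hx0lo hpa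
          nlinarith
      · rw [if_neg hts] at hlo
        rw [hlo] at hx0lo hx0hi
        push_neg at hts
        constructor
        · have h1 : x0 * a ^ (i + 1) ≤ (1 - a + b - 1) * a ^ (i + 1) :=
            mul_le_mul_of_nonneg_right (by linarith) hpa
          nlinarith
        · have h1 : (1 - a) * a ^ (i + 1) ≤ x0 * a ^ (i + 1) :=
            mul_le_mul_of_nonneg_right hx0lo hpa
          nlinarith [mul_le_mul_of_nonneg_right hab.le hpa]
    have ht'bound : |t'| ≤ b ^ i + a ^ (i + 1) := by
      have h1 : b * |t'| ≤ b * (b ^ i + a ^ (i + 1)) := by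
        calc b * |t'| = |b * t'| := by rw [abs_mul, abs_of_pos hb]
        _ = |t - x0 * a ^ (i + 1)| := by rw [hbt']
        _ ≤ _ := habs
      exact le_of_mul_le_mul_left h1 hb
    obtain ⟨x', hx'b, hx's⟩ := ih t' ht'bound
    have hx0abs : |x0| ≤ a + b := by
      rw [abs_le]
      by_cases hts : 0 ≤ t
      · rw [if_pos hts] at hlo
        constructor <;> [linarith [hx0lo, hlo ▸ hx0lo]; linarith [hx0hi, hlo ▸ hx0hi]]
      · rw [if_neg hts] at hlo
        constructor <;> [linarith [hlo ▸ hx0lo]; linarith [hlo ▸ hx0hi]]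
    refine ⟨fun n => if n = 0 then x0 else x' (n - 1), ?_, ?_⟩
    · intro j hj
      by_cases hj0 : j = 0
      · simp [hj0, hx0abs]
      · simp only [if_neg hj0]
        exact hx'b (j - 1) (by omega)
    · rw [Finset.sum_range_succ']
      simp only [if_neg (Nat.succ_ne_zero _), if_pos rfl, Nat.add_sub_cancel,
        Nat.sub_zero, pow_zero, mul_one, if_true]
      have hsum : ∑ j ∈ Finset.range (i + 1),
          x' j * a ^ (i + 1 - (j + 1)) * b ^ (j + 1)
          = (∑ j ∈ Finset.range (i + 1), x' j * a ^ (i - j) * b ^ j) * b := by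
        rw [Finset.sum_mul]
        apply Finset.sum_congr rfl
        intro j hj
        have : i + 1 - (j + 1) = i - j := by omega
        rw [this, pow_succ]
        ring
      rw [hsum, ← hx's]
      linarith [hbt']
end

section
/- Let a, b be coprime integers with 0 ≤ a < b and let d ≥ 1 be an integer. Define φ : ℤ^d → ℤ by φ(v_0, …, v_{d−1}) = Σ_{i=0}^{d−1} v_i · a^{d−1−i} · b^i. Then there exists a set S ⊆ {v ∈ ℤ^d : |v_i| ≤ a + b for all i} such that the restriction of φ to S is a bijection from S onto the centred interval 𝕀(b^{d−1}). -/
/-- The centred interval of length `L`: `𝕀(L) = [-L/2, L/2) ∩ ℤ`. -/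
def centredInterval (L : ℝ) : Set ℤ :=
  {t : ℤ | -(L / 2) ≤ (t : ℝ) ∧ (t : ℝ) < L / 2}

lemma key (a b : ℤ) (hcop : IsCoprime a b) (ha : 0 ≤ a) (hab : a < b) :
    ∀ n : ℕ, ∀ t : ℤ, 2 * |t| ≤ b ^ n + a ^ (n + 1) →
      ∃ v : Fin (n + 1) → ℤ, (∀ i, |v i| ≤ a + b) ∧
        ∑ i : Fin (n + 1), v i * a ^ (n - (i : ℕ)) * b ^ (i : ℕ) = t := by
  have hb : 0 < b := lt_of_le_of_lt ha hab
  intro n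
  induction n with
  | zero =>
    intro t ht
    refine ⟨fun _ => t, fun i => ?_, by simp⟩
    show |t| ≤ a + b
    have h1 : a ^ (0 + 1) = a := by ring
    have h2 : (b:ℤ) ^ 0 = 1 := by ring
    linarith [ht, h1 ▸ h2 ▸ ht]
  | succ n IH =>
    intro t ht
    rcases eq_or_lt_of_le ha with ha0 | ha1
    · -- a = 0 forces b = 1 and t = 0
      have hb1 : b = 1 := by
        have hu : IsUnit b := isCoprime_zero_left.mp (ha0 ▸ hcop)
        rcases Int.isUnit_iff.mp hu with h | h <;> omega
      have ht0 : t = 0 := by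
        rw [← ha0, hb1] at ht
        simp at ht
        rcases abs_cases t with ⟨h, _⟩ | ⟨h, _⟩ <;> omega
      refine ⟨fun _ => 0, fun i => ?_, by simp [ht0]⟩
      show |(0:ℤ)| ≤ a + b
      simp; linarith
    · -- main case : 1 ≤ a
      set P : ℤ := a ^ (n + 1) with hPdef
      have hP : 0 < P := pow_pos ha1 _
      have hbn : (0:ℤ) < b ^ n := pow_pos hb _
      have hPsum : a ^ (n + 1 + 1) = a * P := by rw [hPdef]; ring
      have hbsum : b ^ (n + 1) = b * b ^ n := by ring
      have hbP : b * P = b * a ^ (n + 1) := by rw [hPdef]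
      -- the key reduction step
      have step : ∀ v0 : ℤ, |v0| ≤ a + b → b ∣ (t - v0 * P) →
          2 * |t - v0 * P| ≤ b * (b ^ n + a ^ (n + 1)) →
          ∃ v : Fin (n + 1 + 1) → ℤ, (∀ i, |v i| ≤ a + b) ∧
            ∑ i : Fin (n + 1 + 1), v i * a ^ (n + 1 - (i : ℕ)) * b ^ (i : ℕ) = t := by
        intro v0 h1 hdvd h3
        obtain ⟨q, hq⟩ := hdvd
        have hq2 : 2 * |q| ≤ b ^ n + a ^ (n + 1) := by
          have hbq : |t - v0 * P| = b * |q| := by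
            rw [hq, abs_mul, abs_of_pos hb]
          rw [hbq] at h3
          exact le_of_mul_le_mul_left (by linarith) hb
        obtain ⟨w, hw1, hw2⟩ := IH q hq2
        refine ⟨Fin.cons v0 w, ?_, ?_⟩
        · intro i
          refine Fin.cases ?_ ?_ i
          · simpa using h1
          · intro j; simpa using hw1 j
        · rw [Fin.sum_univ_succ]
          simp only [Fin.cons_zero, Fin.cons_succ, Fin.val_zero, Fin.val_succ, pow_zero,
            Nat.sub_zero, mul_one]
          have hterm : ∀ j : Fin (n + 1), w j * a ^ (n + 1 - ((j : ℕ) + 1)) * b ^ ((j : ℕ) + 1)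
              = b * (w j * a ^ (n - (j : ℕ)) * b ^ (j : ℕ)) := by
            intro j
            rw [Nat.succ_sub_succ]
            ring
          rw [Finset.sum_congr rfl (fun j _ => hterm j), ← Finset.mul_sum, hw2]
          have : v0 * a ^ (n + 1) = v0 * P := by rw [hPdef]
          linarith [hq]
      -- find the residue r with b ∣ t - r * P
      obtain ⟨u, w, huw⟩ := (hcop.pow_left (m := n + 1))
      set r : ℤ := t * u with hrdef
      have hdr0 : t - r * P = b * (t * w) := by
        have huw' : u * P + w * b = 1 := by rw [hPdef]; linarith [huw]
        rw [hrdef]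
        linear_combination (-t) * huw'
      have hdr : ∀ v0 : ℤ, b ∣ (v0 - r) → b ∣ t - v0 * P := by
        rintro v0 ⟨c, hc⟩
        exact ⟨t * w - c * P, by linear_combination hdr0 - P * hc⟩
      rcases le_or_gt (2 * |t|) ((2 * a + b) * P) with hA | hBC
      · -- balanced choice
        have hD : 0 < b * P := mul_pos hb hP
        set k : ℤ := (2 * (t - r * P) + b * P) / (2 * (b * P)) with hkdef
        set e : ℤ := (2 * (t - r * P) + b * P) % (2 * (b * P)) with hedef
        have he0 : 0 ≤ e := Int.emod_nonneg _ (by positivity)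
        have he1 : e < 2 * (b * P) := Int.emod_lt_of_pos _ (by positivity)
        have heq : 2 * (b * P) * k + e = 2 * (t - r * P) + b * P := Int.mul_ediv_add_emod _ _
        set v0 : ℤ := r + k * b with hv0def
        have hc : 2 * (t - v0 * P) = e - b * P := by
          rw [hv0def]
          have : 2 * (t - (r + k * b) * P) = 2 * (t - r * P) - 2 * (k * (b * P)) := by
            ring
          linarith [heq, this]
        have hcabs : 2 * |t - v0 * P| ≤ b * P := by
          rcases abs_cases (t - v0 * P) with ⟨h, _⟩ | ⟨h, _⟩ <;> linarith
        refine step v0 ?_ (hdr v0 ⟨k, by rw [hv0def]; ring⟩) ?_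
        · -- |v0| ≤ a + b
          have h1 : |v0| * P = |v0 * P| := by rw [abs_mul, abs_of_pos hP]
          have h2 : |v0 * P| ≤ |t| + |t - v0 * P| := by
            calc |v0 * P| = |t - (t - v0 * P)| := by congr 1; ring
            _ ≤ |t| + |t - v0 * P| := abs_sub _ _
          have h3 : |v0| * P ≤ (a + b) * P := by
            linarith [h1, h2, hcabs, hA]
          exact le_of_mul_le_mul_right h3 hP
        · calc 2 * |t - v0 * P| ≤ b * P := hcabs
          _ ≤ b * (b ^ n + a ^ (n + 1)) := by
              rw [hbP, mul_add]
              have := mul_pos hb hbn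
              linarith
      · rcases le_or_gt 0 t with htpos | htneg
        · -- t large positive
          have habs : |t| = t := abs_of_nonneg htpos
          have ht2 : (2 * a + b) * P < 2 * t := by rwa [habs] at hBC
          set e : ℤ := (a + b - r) % b with hedef
          have he0 : 0 ≤ e := Int.emod_nonneg _ (by positivity)
          have he1 : e < b := Int.emod_lt_of_pos _ hb
          set v0 : ℤ := a + b - e with hv0def
          have hv0a : a + 1 ≤ v0 := by omega
          have hv0b : v0 ≤ a + b := by omega
          have hdvd : b ∣ v0 - r := by
            refine ⟨(a + b - r) / b, ?_⟩
            have := Int.emod_def (a + b - r) b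
            rw [hv0def, hedef]
            linarith [this]
          have e1 : (a + 1) * P ≤ v0 * P := mul_le_mul_of_nonneg_right hv0a hP.le
          have e2 : v0 * P ≤ (a + b) * P := mul_le_mul_of_nonneg_right hv0b hP.le
          refine step v0 (by rw [abs_of_pos (by omega)]; omega) (hdr v0 hdvd) ?_
          have h5 : b * (b ^ n + a ^ (n + 1)) = b * b ^ n + b * P := by
            rw [hPdef]; ring
          have hta : 2 * t ≤ b ^ (n + 1) + a ^ (n + 1 + 1) := habs ▸ ht
          have hub : 2 * (t - v0 * P) ≤ b * (b ^ n + a ^ (n + 1)) := by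
            linarith [hta, e1, hPsum, hbsum, hP, mul_pos hb hP, mul_nonneg ha hP.le, h5]
          have hlb : -(b * (b ^ n + a ^ (n + 1))) ≤ 2 * (t - v0 * P) := by
            linarith [ht2, e2, h5, mul_pos hb hbn]
          rcases abs_cases (t - v0 * P) with ⟨h, _⟩ | ⟨h, _⟩ <;> linarith
        · -- t large negative
          have habs : |t| = -t := abs_of_neg htneg
          have ht2 : (2 * a + b) * P < 2 * (-t) := by rwa [habs] at hBC
          set e : ℤ := (r + (a + b)) % b with hedef
          have he0 : 0 ≤ e := Int.emod_nonneg _ (by positivity)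
          have he1 : e < b := Int.emod_lt_of_pos _ hb
          set v0 : ℤ := -(a + b) + e with hv0def
          have hv0a : v0 ≤ -(a + 1) := by omega
          have hv0b : -(a + b) ≤ v0 := by omega
          have hdvd : b ∣ v0 - r := by
            refine ⟨-((r + (a + b)) / b), ?_⟩
            have := Int.emod_def (r + (a + b)) b
            rw [hv0def, hedef]
            linarith [this]
          have e1 : v0 * P ≤ (-(a + 1)) * P := mul_le_mul_of_nonneg_right hv0a hP.le
          have e2 : (-(a + b)) * P ≤ v0 * P := mul_le_mul_of_nonneg_right hv0b hP.le
          refine step v0 (by rw [abs_of_neg (by omega)]; omega) (hdr v0 hdvd) ?_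
          have h5 : b * (b ^ n + a ^ (n + 1)) = b * b ^ n + b * P := by
            rw [hPdef]; ring
          have hub : 2 * (t - v0 * P) ≤ b * (b ^ n + a ^ (n + 1)) := by
            linarith [ht2, e2, h5, mul_pos hb hbn]
          have hlb : -(b * (b ^ n + a ^ (n + 1))) ≤ 2 * (t - v0 * P) := by
            have hta : 2 * (-t) ≤ b ^ (n + 1) + a ^ (n + 1 + 1) := habs ▸ ht
            linarith [hta, e1, hPsum, hbsum, hP, mul_pos hb hP, mul_nonneg ha hP.le, h5]
          rcases abs_cases (t - v0 * P) with ⟨h, _⟩ | ⟨h, _⟩ <;> linarith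


theorem stmt6 (a b : ℤ) (hcop : Int.gcd a b = 1) (ha : 0 ≤ a) (hab : a < b)
    (d : ℕ) (hd : 1 ≤ d) :
    ∃ S : Set (Fin d → ℤ), S ⊆ {v : Fin d → ℤ | ∀ i, |v i| ≤ a + b} ∧
      Set.BijOn (fun v : Fin d → ℤ => ∑ i : Fin d, v i * a ^ (d - 1 - (i : ℕ)) * b ^ (i : ℕ))
        S (centredInterval ((b : ℝ) ^ (d - 1))) := by
  obtain ⟨n, rfl⟩ : ∃ n, d = n + 1 := ⟨d - 1, by omega⟩
  have hcop' : IsCoprime a b := Int.isCoprime_iff_gcd_eq_one.mpr hcop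
  have hb : 0 < b := lt_of_le_of_lt ha hab
  have hmem : ∀ t : ℤ, t ∈ centredInterval ((b : ℝ) ^ (n + 1 - 1)) →
      2 * |t| ≤ b ^ n + a ^ (n + 1) := by
    intro t ht
    obtain ⟨h1, h2⟩ := ht
    have hn : n + 1 - 1 = n := rfl
    rw [hn] at h1 h2
    have hc : ((b ^ n : ℤ) : ℝ) = (b : ℝ) ^ n := by push_cast; ring
    have hl : -((b ^ n : ℤ) : ℝ) ≤ ((2 * t : ℤ) : ℝ) := by push_cast; rw [← hc]; push_cast; linarith
    have hr : ((2 * t : ℤ) : ℝ) < ((b ^ n : ℤ) : ℝ) := by push_cast; rw [← hc]; push_cast; linarith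
    have hl' : -(b ^ n : ℤ) ≤ 2 * t := by exact_mod_cast hl
    have hr' : 2 * t < (b ^ n : ℤ) := by exact_mod_cast hr
    have := pow_nonneg ha (n + 1)
    rcases abs_cases t with ⟨h, _⟩ | ⟨h, _⟩ <;> omega
  have hrep : ∀ t ∈ centredInterval ((b : ℝ) ^ (n + 1 - 1)),
      ∃ v : Fin (n + 1) → ℤ, (∀ i, |v i| ≤ a + b) ∧
        ∑ i : Fin (n + 1), v i * a ^ (n - (i : ℕ)) * b ^ (i : ℕ) = t :=
    fun t ht => key a b hcop' ha hab n t (hmem t ht)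
  choose! g hg1 hg2 using hrep
  refine ⟨g '' centredInterval ((b : ℝ) ^ (n + 1 - 1)), ?_, ?_, ?_, ?_⟩
  · rintro _ ⟨t, ht, rfl⟩
    exact hg1 t ht
  · rintro _ ⟨t, ht, rfl⟩
    show (∑ i : Fin (n + 1), g t i * a ^ (n + 1 - 1 - (i : ℕ)) * b ^ (i : ℕ)) ∈ _
    have : (∑ i : Fin (n + 1), g t i * a ^ (n + 1 - 1 - (i : ℕ)) * b ^ (i : ℕ)) = t := hg2 t ht
    rw [this]; exact ht
  · rintro _ ⟨t1, h1, rfl⟩ _ ⟨t2, h2, rfl⟩ hxy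
    have h12 : t1 = t2 := by
      have e1 := hg2 t1 h1
      have e2 := hg2 t2 h2
      simp only at hxy
      rw [← e1, ← e2]
      exact hxy
    rw [h12]
  · intro t ht
    exact ⟨g t, ⟨t, ht, rfl⟩, hg2 t ht⟩
end

section
/- Let X be a nonnegative real-valued random variable on a probability space with expectation μ = E[X], and suppose K ≥ 1 is a real number such that X ≤ K·μ almost surely. Then there exists i ∈ {0, 1, …, ⌈log₂ K⌉} such that P(X ≥ 2^i · μ / (1 + ⌈log₂ K⌉)) ≥ 2^{−(i+1)}. -/
open MeasureTheory Finset Set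

/-!
Put `μ = E[X]`, `L = ⌈log₂ K⌉` and `tᵢ = 2ⁱ μ / (1 + L)`, so that `X ≤ 2ᴸ μ` almost surely.
Pointwise, `X ≤ t₀ + ∑_{i<L} (tᵢ₊₁ - tᵢ) 1{X ≥ tᵢ} + (2ᴸ μ - t_L) 1{X ≥ t_L}`, a discrete
layer-cake bound. If every `P(X ≥ tᵢ)` were below `2^{-(i+1)}`, each of the `L` middle terms
would contribute at most `μ / (2(1 + L))` in expectation and the last one less than
`L μ / (2(1 + L))`, giving `μ < t₀ + L μ / (1 + L) = μ`.
The degenerate cases `μ = 0` and `L = 0` are those where `X ≤ μ` almost surely, hence `X = μ`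
almost surely and `i = 0` works.
-/

lemma Real.le_pow_natCeil_logb {b x : ℝ} (hb : 1 < b) (hx : 0 < x) :
    x ≤ b ^ ⌈Real.logb b x⌉₊ := by
  rw [← Real.rpow_natCast, ← Real.logb_le_iff_le_rpow hb hx]
  exact Nat.le_ceil _

lemma min_le_add_sum_indicator_Ici {t : ℕ → ℝ} (ht : Monotone t) (x : ℝ) (N : ℕ) :
    min x (t N) ≤ t 0 + ∑ i ∈ range N, (t (i + 1) - t i) * (Ici (t i)).indicator 1 x := by
  induction N with
  | zero => simp
  | succ N ih =>
    rw [sum_range_succ, ← add_assoc]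
    by_cases hx : t N ≤ x
    · rw [min_eq_right hx] at ih
      rw [indicator_of_mem (Set.mem_Ici.2 hx), Pi.one_apply, mul_one]
      linarith [min_le_right x (t (N + 1))]
    · push Not at hx
      rw [min_eq_left hx.le] at ih
      rw [indicator_of_notMem (notMem_Ici.2 hx), mul_zero, add_zero,
        min_eq_left (hx.le.trans (ht N.le_succ))]
      exact ih

lemma le_add_sum_indicator_Ici {t : ℕ → ℝ} (ht : Monotone t) {x M : ℝ} (hxM : x ≤ M)
    (N : ℕ) :
    x ≤ t 0 + ∑ i ∈ range N, (t (i + 1) - t i) * (Ici (t i)).indicator 1 x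
      + (M - t N) * (Ici (t N)).indicator 1 x := by
  have key := min_le_add_sum_indicator_Ici ht x N
  by_cases hx : t N ≤ x
  · rw [min_eq_right hx] at key
    rw [indicator_of_mem (Set.mem_Ici.2 hx), Pi.one_apply]
    linarith
  · rw [min_eq_left (not_le.1 hx).le] at key
    rw [indicator_of_notMem (notMem_Ici.2 (not_le.1 hx))]
    linarith

section LayerCake

variable {Ω : Type*} [MeasurableSpace Ω] {P : Measure Ω} [IsProbabilityMeasure P]

lemma integral_le_add_sum_measureReal {X : Ω → ℝ} (hX : Integrable X P) {t : ℕ → ℝ}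
    (ht : Monotone t) {M : ℝ} (hXM : ∀ᵐ ω ∂P, X ω ≤ M) (N : ℕ) :
    ∫ ω, X ω ∂P ≤ t 0 + ∑ i ∈ range N, (t (i + 1) - t i) * P.real {ω | t i ≤ X ω}
      + (M - t N) * P.real {ω | t N ≤ X ω} := by
  have hA (c : ℝ) : NullMeasurableSet {ω | c ≤ X ω} P :=
    nullMeasurableSet_le aemeasurable_const hX.aemeasurable
  have hind (c : ℝ) : (fun ω ↦ (Ici c).indicator (1 : ℝ → ℝ) (X ω)) =
      {ω | c ≤ X ω}.indicator 1 := by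
    ext ω
    by_cases h : c ≤ X ω <;> simp [h]
  have hint (c : ℝ) : Integrable (fun ω ↦ (Ici c).indicator (1 : ℝ → ℝ) (X ω)) P := by
    rw [hind]
    exact (integrable_const 1).indicator₀ (hA c)
  have hint_eq (c : ℝ) :
      ∫ ω, (Ici c).indicator (1 : ℝ → ℝ) (X ω) ∂P = P.real {ω | c ≤ X ω} := by
    rw [hind, integral_indicator₀ (hA c)]
    simp
  have hsum : Integrable (fun ω ↦
      ∑ i ∈ range N, (t (i + 1) - t i) * (Ici (t i)).indicator (1 : ℝ → ℝ) (X ω)) P :=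
    integrable_finsetSum _ fun i _ ↦ (hint _).const_mul _
  have hhead : Integrable (fun ω ↦
      t 0 + ∑ i ∈ range N, (t (i + 1) - t i) * (Ici (t i)).indicator (1 : ℝ → ℝ) (X ω)) P :=
    (integrable_const _).add hsum
  calc ∫ ω, X ω ∂P
      ≤ ∫ ω, (t 0 + ∑ i ∈ range N, (t (i + 1) - t i) * (Ici (t i)).indicator 1 (X ω)
          + (M - t N) * (Ici (t N)).indicator 1 (X ω)) ∂P :=
        integral_mono_ae hX (hhead.add ((hint _).const_mul _))
          (hXM.mono fun ω h ↦ le_add_sum_indicator_Ici ht h N)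
    _ = _ := by
        rw [integral_add hhead ((hint _).const_mul _), integral_add (integrable_const _) hsum,
          integral_finsetSum _ fun i _ ↦ (hint _).const_mul _]
        simp only [integral_const, probReal_univ, one_smul, integral_const_mul, hint_eq]

lemma exists_two_pow_inv_le_measureReal {X : Ω → ℝ} (hX : Integrable X P)
    (hμ : 0 < ∫ ω, X ω ∂P) {L : ℕ} (hL : 0 < L) (hXL : ∀ᵐ ω ∂P, X ω ≤ 2 ^ L * ∫ ω, X ω ∂P) :
    ∃ i ≤ L, ((2 : ℝ) ^ (i + 1))⁻¹ ≤ P.real {ω | 2 ^ i * (∫ x, X x ∂P) / (1 + L) ≤ X ω} := by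
  set μ := ∫ ω, X ω ∂P
  set t : ℕ → ℝ := fun i ↦ 2 ^ i * μ / (1 + L)
  by_contra! hsmall
  have hL' : (0 : ℝ) < L := Nat.cast_pos.2 hL
  have ht : Monotone t := fun i j hij ↦ by
    simp only [t]
    gcongr
    norm_num
  have hgap (i : ℕ) : t (i + 1) - t i = 2 ^ i * μ / (1 + L) := by
    simp only [t, pow_succ]
    ring
  have hmiddle : ∑ i ∈ range L, (t (i + 1) - t i) * P.real {ω | t i ≤ X ω}
      ≤ L * (μ / (2 * (1 + L))) := by
    calc ∑ i ∈ range L, (t (i + 1) - t i) * P.real {ω | t i ≤ X ω}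
        ≤ ∑ _i ∈ range L, μ / (2 * (1 + L)) := sum_le_sum fun i hi ↦ by
          rw [hgap]
          calc 2 ^ i * μ / (1 + L) * P.real {ω | t i ≤ X ω}
              ≤ 2 ^ i * μ / (1 + L) * ((2 : ℝ) ^ (i + 1))⁻¹ := by
                gcongr
                exact (hsmall i (mem_range.1 hi).le).le
            _ = μ / (2 * (1 + L)) := by
                field_simp
                ring
      _ = L * (μ / (2 * (1 + L))) := by simp
  have hlast : (2 ^ L * μ - t L) * P.real {ω | t L ≤ X ω} < L * (μ / (2 * (1 + L))) := by
    have hcoef : 2 ^ L * μ - t L = 2 ^ L * μ * L / (1 + L) := by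
      simp only [t]
      field_simp
      ring
    calc (2 ^ L * μ - t L) * P.real {ω | t L ≤ X ω}
        < (2 ^ L * μ - t L) * ((2 : ℝ) ^ (L + 1))⁻¹ := by
          rw [hcoef]
          gcongr
          exact hsmall L le_rfl
      _ = L * (μ / (2 * (1 + L))) := by
          rw [hcoef]
          field_simp
          ring
  have hbound := integral_le_add_sum_measureReal hX ht hXL L
  have htotal : t 0 + L * (μ / (2 * (1 + L))) + L * (μ / (2 * (1 + L))) = μ := by
    simp only [t]
    field_simp
    ring
  linarith

end LayerCake

theorem stmt7 {Ω : Type*} [MeasurableSpace Ω] (P : Measure Ω) [IsProbabilityMeasure P]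
    (X : Ω → ℝ) (hX : Integrable X P) (hX0 : ∀ ω, 0 ≤ X ω)
    (K : ℝ) (hK : 1 ≤ K)
    (hbound : ∀ᵐ ω ∂P, X ω ≤ K * ∫ x, X x ∂P) :
    ∃ i : ℕ, i ≤ ⌈Real.logb 2 K⌉₊ ∧
      ENNReal.ofReal ((2 : ℝ) ^ (i + 1))⁻¹ ≤
        P {ω | (2 : ℝ) ^ i * (∫ x, X x ∂P) / (1 + (⌈Real.logb 2 K⌉₊ : ℝ)) ≤ X ω} := by
  set μ := ∫ x, X x ∂P
  set L := ⌈Real.logb 2 K⌉₊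
  have hKL : K ≤ 2 ^ L := Real.le_pow_natCeil_logb one_lt_two (by linarith)
  have hμ : 0 ≤ μ := integral_nonneg hX0
  by_cases hXμ : ∀ᵐ ω ∂P, X ω ≤ μ
  · have hae : X =ᵐ[P] fun _ ↦ μ :=
      (integral_eq_iff_of_ae_le hX (integrable_const μ) hXμ).1 (by simp [μ])
    refine ⟨0, L.zero_le, ?_⟩
    have hfull : {ω | (2 : ℝ) ^ 0 * μ / (1 + (L : ℝ)) ≤ X ω} =ᵐ[P] (univ : Set Ω) :=
      Filter.eventuallyEq_univ.2 <| hae.mono fun ω h ↦ by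
        simpa [h] using div_le_self hμ (by linarith [L.cast_nonneg (α := ℝ)])
    rw [measure_congr hfull, measure_univ]
    exact ENNReal.ofReal_le_one.2 (by norm_num)
  have hμpos : 0 < μ := hμ.lt_of_ne fun h ↦
    hXμ (hbound.mono fun ω hω ↦ by simpa [← h] using hω)
  have hLpos : 0 < L := Nat.pos_of_ne_zero fun h ↦ hXμ (hbound.mono fun ω hω ↦
    hω.trans (mul_le_of_le_one_left hμ (by simpa [h] using hKL)))
  obtain ⟨i, hi, hp⟩ := exists_two_pow_inv_le_measureReal hX hμpos hLpos
    (hbound.mono fun ω hω ↦ hω.trans (by gcongr))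
  exact ⟨i, hi, ENNReal.ofReal_le_of_le_toReal hp⟩
end

section
/- There is an absolute constant C > 0 with the following property. Let d ≥ 1 and H ≥ 1 be integers and let a, b be coprime integers with 1 ≤ a < b. Let μ be the uniform probability mass function on 𝕀(2H)^d ⊆ ℤ^d, let φ : ℤ^d → ℤ be given by φ(v_0, …, v_{d−1}) = Σ_{i=0}^{d−1} v_i · a^{d−1−i} · b^i, and let φ^μ denote the pushforward of μ under φ, a probability mass function on ℤ. Then there exists a probability mass function ϑ on ℤ which is the convolution, over i = 0, …, d−1, of uniform probability mass functions on sets of 2H·a^i·b^{d−1−i} consecutive integers, such that Σ_{t ∈ ℤ} |φ^μ(t) − ϑ(t)| ≤ C·d²·(a + b)/H and |Σ_{t ∈ ℤ} t·ϑ(t)| ≤ Σ_{i=0}^{d−1} a^i·b^{d−1−i}. -/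
/-- The uniform probability mass function on a finite set of integers, viewed as an
element of `AddMonoidAlgebra ℝ ℤ` (whose multiplication is convolution). -/
noncomputable def unifPMF (s : Finset ℤ) : AddMonoidAlgebra ℝ ℤ :=
  ∑ t ∈ s, AddMonoidAlgebra.single t ((s.card : ℝ))⁻¹

/-- The pushforward under `φ(v) = Σ_i v_i a^{d-1-i} b^i` of the uniform probability mass
function on `𝕀(2H)^d = ([-H, H) ∩ ℤ)^d`, viewed as an element of `AddMonoidAlgebra ℝ ℤ`. -/
noncomputable def pushPMF (d : ℕ) (H a b : ℤ) : AddMonoidAlgebra ℝ ℤ :=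
  ∑ v ∈ Fintype.piFinset (fun _ : Fin d => Finset.Ico (-H) H),
    AddMonoidAlgebra.single (∑ i : Fin d, v i * a ^ (d - 1 - (i : ℕ)) * b ^ (i : ℕ))
      (((2 * H : ℤ) : ℝ) ^ d)⁻¹

/-!
Write `c i = a ^ (d-1-i) * b ^ i`, `F i` for the uniform distribution on `c i • [-H, H)` and `U i`
for the uniform distribution on `[0, c i)`. Then `φ^μ = ∏ F i`, and `U i ⋆ F i` is uniform on
`2 H c i` consecutive integers, so `ϑ = (∏ U i) ⋆ φ^μ` and `φ^μ - ϑ = (1 - ∏ U i) ⋆ φ^μ`.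
In `ℓ¹`, `‖(1 - ∏ U i) ⋆ f‖ ≤ ∑ ‖(1 - U i) ⋆ f‖`, and averaging over the support of `U i` bounds
`‖(1 - U i) ⋆ f‖` by the worst `‖(1 - δ r) ⋆ f‖` with `0 ≤ r < c i ≤ b ^ (d-1)`. Translating `F k`
by its step `c k` costs `1/H`, and since `a` and `b` are coprime every such `r` is a combination
`∑ δ k * c k` with `∑ |δ k| ≤ d (a + b)`; hence each `U i` costs `d (a + b) / H`.
Each factor of `ϑ` has mean `-1/2`, so `ϑ` has mean `-d/2`.
-/

open Finset AddMonoidAlgebra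

section L1Norm

variable {G : Type*}

noncomputable def l1Norm [AddMonoid G] (f : AddMonoidAlgebra ℝ G) : ℝ :=
  ∑ t ∈ f.coeff.support, |f.coeff t|

section AddMonoid

variable [AddMonoid G]

lemma l1Norm_eq_sum_of_support_subset {f : AddMonoidAlgebra ℝ G} {s : Finset G}
    (h : f.coeff.support ⊆ s) : l1Norm f = ∑ t ∈ s, |f.coeff t| :=
  sum_subset h fun t _ ht => by simp [Finsupp.notMem_support_iff.mp ht]

lemma l1Norm_nonneg (f : AddMonoidAlgebra ℝ G) : 0 ≤ l1Norm f :=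
  sum_nonneg fun _ _ => abs_nonneg _

@[simp]
lemma l1Norm_zero : l1Norm (0 : AddMonoidAlgebra ℝ G) = 0 := by simp [l1Norm]

@[simp]
lemma l1Norm_single (t : G) (c : ℝ) : l1Norm (single t c) = |c| := by
  rw [l1Norm_eq_sum_of_support_subset (f := single t c) Finsupp.support_single_subset,
    sum_singleton, coeff_single, Finsupp.single_eq_same]

@[simp]
lemma l1Norm_neg (f : AddMonoidAlgebra ℝ G) : l1Norm (-f) = l1Norm f := by
  simp [l1Norm, coeff_neg, Finsupp.support_neg]

lemma l1Norm_add_le (f g : AddMonoidAlgebra ℝ G) : l1Norm (f + g) ≤ l1Norm f + l1Norm g := by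
  classical
  rw [l1Norm_eq_sum_of_support_subset (f := f + g) Finsupp.support_add,
    l1Norm_eq_sum_of_support_subset (subset_union_left (s₂ := g.coeff.support)),
    l1Norm_eq_sum_of_support_subset (subset_union_right (s₁ := f.coeff.support)),
    ← sum_add_distrib]
  exact sum_le_sum fun t _ => abs_add_le (f.coeff t) (g.coeff t)

lemma l1Norm_sub_le (f g : AddMonoidAlgebra ℝ G) : l1Norm (f - g) ≤ l1Norm f + l1Norm g := by
  simpa [sub_eq_add_neg] using l1Norm_add_le f (-g)

lemma l1Norm_sum_le {ι : Type*} (s : Finset ι) (f : ι → AddMonoidAlgebra ℝ G) :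
    l1Norm (∑ i ∈ s, f i) ≤ ∑ i ∈ s, l1Norm (f i) :=
  le_sum_of_subadditive l1Norm l1Norm_zero.le l1Norm_add_le s f

lemma l1Norm_mul_le (f g : AddMonoidAlgebra ℝ G) : l1Norm (f * g) ≤ l1Norm f * l1Norm g :=
  calc l1Norm (f * g)
      ≤ ∑ s ∈ f.coeff.support, ∑ t ∈ g.coeff.support,
          l1Norm (single (s + t) (f.coeff s * g.coeff t)) := by
        rw [AddMonoidAlgebra.mul_def]
        exact (l1Norm_sum_le _ _).trans (sum_le_sum fun s _ => l1Norm_sum_le _ _)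
    _ = l1Norm f * l1Norm g := by
        simp only [l1Norm_single, abs_mul]
        rw [l1Norm, l1Norm, sum_mul_sum]

lemma l1Norm_mul_le_of_le_one {f g : AddMonoidAlgebra ℝ G} (hg : l1Norm g ≤ 1) :
    l1Norm (f * g) ≤ l1Norm f :=
  (l1Norm_mul_le f g).trans (mul_le_of_le_one_right (l1Norm_nonneg f) hg)

end AddMonoid

lemma l1Norm_prod_le_one [AddCommMonoid G] {ι : Type*} (s : Finset ι)
    (f : ι → AddMonoidAlgebra ℝ G) (h : ∀ i ∈ s, l1Norm (f i) ≤ 1) :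
    l1Norm (∏ i ∈ s, f i) ≤ 1 := by
  induction s using Finset.cons_induction with
  | empty => simp [one_def]
  | cons i s hi ih =>
    rw [prod_cons]
    exact (l1Norm_mul_le_of_le_one (ih fun j hj => h j (mem_cons_of_mem hj))).trans
      (h i (mem_cons_self i s))

end L1Norm

section Smoothing

variable {G : Type*}

lemma l1Norm_one_sub_sum_single_mul_le [AddMonoid G] {S : Finset G} {w : G → ℝ}
    (hw : ∀ r ∈ S, 0 ≤ w r) (hw1 : ∑ r ∈ S, w r = 1) {f : AddMonoidAlgebra ℝ G} {K : ℝ}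
    (hK : ∀ r ∈ S, l1Norm ((1 - single r 1) * f) ≤ K) :
    l1Norm ((1 - ∑ r ∈ S, single r (w r)) * f) ≤ K := by
  have hsplit : (1 - ∑ r ∈ S, single r (w r)) * f
      = ∑ r ∈ S, single 0 (w r) * ((1 - single r 1) * f) := by
    have hone : (1 : AddMonoidAlgebra ℝ G) = ∑ r ∈ S, single 0 (w r) := by
      rw [one_def, ← hw1]
      exact map_sum (singleAddHom 0) w S
    simp_rw [← mul_assoc, mul_sub, mul_one, single_mul_single, zero_add, mul_one, ← sum_mul,
      sum_sub_distrib, ← hone]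
  rw [hsplit]
  calc l1Norm (∑ r ∈ S, single 0 (w r) * ((1 - single r 1) * f))
      ≤ ∑ r ∈ S, w r * K := (l1Norm_sum_le _ _).trans <| sum_le_sum fun r hr => by
        refine (l1Norm_mul_le _ _).trans ?_
        rw [l1Norm_single, abs_of_nonneg (hw r hr)]
        exact mul_le_mul_of_nonneg_left (hK r hr) (hw r hr)
    _ = K := by rw [← sum_mul, hw1, one_mul]

section AddCommMonoid

variable [AddCommMonoid G]

lemma l1Norm_one_sub_mul_mul_le {U : AddMonoidAlgebra ℝ G} (hU : l1Norm U ≤ 1)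
    (V f : AddMonoidAlgebra ℝ G) :
    l1Norm ((1 - U * V) * f) ≤ l1Norm ((1 - U) * f) + l1Norm ((1 - V) * f) := by
  have hsplit : (1 - U * V) * f = (1 - U) * f + (1 - V) * f * U := by ring
  rw [hsplit]
  exact (l1Norm_add_le _ _).trans (add_le_add_right (l1Norm_mul_le_of_le_one hU) _)

lemma l1Norm_one_sub_prod_mul_le {ι : Type*} (s : Finset ι) (U : ι → AddMonoidAlgebra ℝ G)
    (hU : ∀ i ∈ s, l1Norm (U i) ≤ 1) (f : AddMonoidAlgebra ℝ G) :
    l1Norm ((1 - ∏ i ∈ s, U i) * f) ≤ ∑ i ∈ s, l1Norm ((1 - U i) * f) := by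
  induction s using Finset.cons_induction with
  | empty => simp
  | cons i s hi ih =>
    rw [prod_cons, sum_cons]
    exact (l1Norm_one_sub_mul_mul_le (hU i (mem_cons_self i s)) _ f).trans
      (add_le_add_right (ih fun j hj => hU j (mem_cons_of_mem hj)) _)

lemma l1Norm_mul_prod_le {ι : Type*} [DecidableEq ι] {s : Finset ι} {k : ι} (hk : k ∈ s)
    (F : ι → AddMonoidAlgebra ℝ G) (hF : ∀ i ∈ s, l1Norm (F i) ≤ 1) (x : AddMonoidAlgebra ℝ G) :
    l1Norm (x * ∏ i ∈ s, F i) ≤ l1Norm (x * F k) := by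
  rw [← mul_prod_erase s F hk, ← mul_assoc]
  exact l1Norm_mul_le_of_le_one (l1Norm_prod_le_one _ _ fun i hi => hF i (mem_of_mem_erase hi))

end AddCommMonoid

lemma l1Norm_one_sub_single_zsmul_mul_le [AddCommGroup G] (j : ℤ) (x : G)
    (f : AddMonoidAlgebra ℝ G) :
    l1Norm ((1 - single (j • x) 1) * f) ≤ |j| * l1Norm ((1 - single x 1) * f) := by
  have hnat (n : ℕ) : l1Norm ((1 - single ((n : ℤ) • x) 1) * f)
      ≤ n * l1Norm ((1 - single x 1) * f) := by
    simpa using l1Norm_one_sub_prod_mul_le (range n) (fun _ => single x 1) (by simp) f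
  obtain ⟨n, rfl | rfl⟩ := Int.eq_nat_or_neg j
  · simpa using hnat n
  · have hflip : (1 - single (-(n : ℤ) • x) (1 : ℝ)) * f
        = -(single (-((n : ℤ) • x)) 1 * ((1 - single ((n : ℤ) • x) 1) * f)) := by
      rw [← mul_assoc, mul_sub, mul_one, single_mul_single, neg_add_cancel, mul_one, ← one_def,
        neg_smul]
      ring
    rw [hflip, l1Norm_neg, abs_neg, Nat.abs_cast]
    exact (l1Norm_mul_le _ _).trans (by simpa using hnat n)

end Smoothing

section UniformAP

variable {G : Type*} [AddCommMonoid G]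

noncomputable def uniformAP (s c : G) (n : ℕ) : AddMonoidAlgebra ℝ G :=
  ∑ j ∈ range n, single (s + j • c) (n : ℝ)⁻¹

lemma l1Norm_uniformAP_le (s c : G) (n : ℕ) : l1Norm (uniformAP s c n) ≤ 1 := by
  refine (l1Norm_sum_le _ _).trans ?_
  simpa using mul_inv_le_one (a := (n : ℝ))

lemma one_sub_single_mul_uniformAP (s c : G) (n : ℕ) :
    (1 - single c 1) * uniformAP s c n = single s (n : ℝ)⁻¹ - single (s + n • c) (n : ℝ)⁻¹ := by
  have hstep (j : ℕ) : c + (s + j • c) = s + (j + 1) • c := by rw [succ_nsmul]; abel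
  simp_rw [uniformAP, sub_mul, one_mul, mul_sum, single_mul_single, one_mul, hstep]
  simpa using sum_range_sub' (fun j => single (s + j • c) (n : ℝ)⁻¹) n

lemma l1Norm_one_sub_single_mul_uniformAP_le (s c : G) (n : ℕ) :
    l1Norm ((1 - single c 1) * uniformAP s c n) ≤ 2 / n := by
  rw [one_sub_single_mul_uniformAP]
  refine (l1Norm_sub_le _ _).trans_eq ?_
  simp [div_eq_mul_inv, two_mul]

lemma uniformAP_mul_uniformAP (s c : G) (v n : ℕ) :
    uniformAP 0 c v * uniformAP s (v • c) n = uniformAP s c (v * n) := by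
  rcases Nat.eq_zero_or_pos v with rfl | hv
  · simp [uniformAP]
  rw [uniformAP, uniformAP, uniformAP, sum_mul_sum, ← sum_product']
  refine sum_nbij' (fun p => p.1 + v * p.2) (fun l => (l % v, l / v)) ?_ ?_ ?_ ?_ ?_
  · rintro ⟨i, j⟩ hij
    simp only [mem_product, mem_range] at hij ⊢
    nlinarith
  · intro l hl
    simp only [mem_product, mem_range] at hl ⊢
    exact ⟨Nat.mod_lt _ hv, Nat.div_lt_of_lt_mul hl⟩
  · rintro ⟨i, j⟩ hij
    simp only [mem_product, mem_range] at hij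
    simp [Nat.add_mul_div_left _ _ hv, Nat.div_eq_of_lt hij.1, Nat.mod_eq_of_lt hij.1]
  · intro l _
    exact Nat.mod_add_div l v
  · rintro ⟨i, j⟩ -
    rw [single_mul_single, zero_add, Nat.cast_mul, mul_inv, add_nsmul, mul_nsmul', add_left_comm,
      smul_comm]

end UniformAP

lemma Int.sum_Ico_add_natCast {M : Type*} [AddCommMonoid M] (s : ℤ) (n : ℕ) (g : ℤ → M) :
    ∑ x ∈ Ico s (s + n), g x = ∑ j ∈ Finset.range n, g (s + j) := by
  rw [Int.Ico_eq_finset_map, sum_map]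
  simp

lemma unifPMF_Ico_eq_uniformAP (s : ℤ) (n : ℕ) : unifPMF (Ico s (s + n)) = uniformAP s 1 n := by
  simp [unifPMF, uniformAP, Int.sum_Ico_add_natCast]

lemma unifPMF_Ico_mul_eq (s : ℤ) (c n : ℕ) :
    unifPMF (Ico (s * c) (s * c + n * c)) = unifPMF (Ico 0 c) * uniformAP (s * c) c n := by
  have h := unifPMF_Ico_eq_uniformAP 0 c
  rw [zero_add] at h
  rw [← Nat.cast_mul, unifPMF_Ico_eq_uniformAP, h, mul_comm n c, ← uniformAP_mul_uniformAP,
    nsmul_one]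

lemma pushPMF_eq_prod_uniformAP (d H : ℕ) (a b : ℤ) :
    pushPMF d H a b = ∏ i ∈ range d,
      uniformAP (-H * (a ^ (d - 1 - i) * b ^ i)) (a ^ (d - 1 - i) * b ^ i) (2 * H) := by
  have hfactor (w : ℤ) : uniformAP (-H * w) w (2 * H)
      = ∑ x ∈ Ico (-(H : ℤ)) H, single (x * w) ((2 * H : ℕ) : ℝ)⁻¹ := by
    have hIco : Ico (-(H : ℤ)) H = Ico (-(H : ℤ)) (-H + (2 * H : ℕ)) := by push_cast; ring_nf
    rw [hIco, Int.sum_Ico_add_natCast, uniformAP]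
    simp [add_mul]
  simp_rw [hfactor, ← Fin.prod_univ_eq_prod_range (fun i => ∑ x ∈ Ico (-(H : ℤ)) H,
    single (x * (a ^ (d - 1 - i) * b ^ i)) ((2 * H : ℕ) : ℝ)⁻¹), prod_univ_sum, prod_single]
  refine sum_congr rfl fun v _ => ?_
  rw [prod_const, card_univ, Fintype.card_fin, inv_pow]
  simp only [mul_assoc]
  push_cast
  rfl

lemma exists_digit_of_isCoprime {A b : ℤ} (h : IsCoprime A b) (hb : 0 < b) (x : ℤ) :
    ∃ β, 0 ≤ β ∧ β < b ∧ b ∣ x - β * A := by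
  obtain ⟨u, v, huv⟩ := h
  refine ⟨x * u % b, Int.emod_nonneg _ hb.ne', Int.emod_lt_of_pos _ hb, ?_⟩
  have hx : x - x * u % b * A = (x * u - x * u % b) * A + b * (x * v) := by
    linear_combination -x * huv
  rw [hx]
  exact dvd_add (dvd_mul_of_dvd_left (Int.dvd_self_sub_emod ..) _) (dvd_mul_right _ _)

/-- Peel off a digit `β ∈ [0, b)` with `x ≡ β * a ^ m [ZMOD b]` (possible by coprimality) and
recurse on `(x - β * a ^ m) / b`, whose size bound grows from `B` to `B + a`. -/
lemma exists_sum_mul_pow_mul_pow {a b : ℤ} (hcop : IsCoprime a b) (ha : 0 < a) (hab : a ≤ b) :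
    ∀ (m : ℕ) (B x : ℤ), |x| ≤ B * b ^ m → ∃ δ : ℕ → ℤ,
      x = ∑ k ∈ range (m + 1), δ k * (a ^ (m - k) * b ^ k) ∧
      ∑ k ∈ range (m + 1), |δ k| ≤ B + m * (a + b - 1) := by
  have hb : 0 < b := ha.trans_le hab
  intro m
  induction m with
  | zero => exact fun B x hx => ⟨fun _ => x, by simp, by simpa using hx⟩
  | succ m ih =>
    intro B x hx
    obtain ⟨β, hβ0, hβb, x', hx'⟩ := exists_digit_of_isCoprime (hcop.pow_left (m := m + 1)) hb x
    have hpow : a ^ (m + 1) ≤ a * b ^ m := by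
      rw [pow_succ']
      exact mul_le_mul_of_nonneg_left (pow_le_pow_left₀ ha.le hab m) ha.le
    have hx'B : |x'| ≤ (B + a) * b ^ m := by
      refine le_of_mul_le_mul_left ?_ hb
      calc b * |x'| = |x - β * a ^ (m + 1)| := by rw [hx', abs_mul, abs_of_pos hb]
        _ ≤ |x| + β * a ^ (m + 1) := by
          simpa [abs_of_nonneg (mul_nonneg hβ0 (pow_pos ha _).le)] using abs_sub x (β * a ^ (m + 1))
        _ ≤ B * b ^ (m + 1) + b * (a * b ^ m) := by
          gcongr
        _ = b * ((B + a) * b ^ m) := by ring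
    obtain ⟨δ, hxδ, hδ⟩ := ih (B + a) x' hx'B
    refine ⟨fun k => if k = 0 then β else δ (k - 1), ?_, ?_⟩
    · rw [sum_range_succ', eq_add_of_sub_eq hx', hxδ, mul_sum]
      simp only [if_pos, if_neg (Nat.succ_ne_zero _), Nat.add_sub_cancel, Nat.sub_zero, pow_zero,
        mul_one, Nat.add_sub_add_right]
      refine congrArg (· + _) (sum_congr rfl fun k _ => by ring)
    · rw [sum_range_succ']
      simp only [if_pos, if_neg (Nat.succ_ne_zero _), Nat.add_sub_cancel]
      rw [abs_of_nonneg hβ0]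
      push_cast
      linarith

noncomputable def momentHom : Multiplicative ℤ →* DualNumber ℝ where
  toFun t := 1 + (t.toAdd : ℝ) • DualNumber.eps
  map_one' := by simp
  map_mul' x y := by
    simp only [toAdd_mul, Int.cast_add, add_smul, add_mul, mul_add, one_mul, mul_one, smul_mul_smul,
      DualNumber.eps_mul_eps, smul_zero, add_zero]
    abel

/-- `(moments f).fst` is the total mass of `f` and `(moments f).snd` its first moment; that
`moments` is multiplicative is the rule that means add under convolution. -/
noncomputable def moments : AddMonoidAlgebra ℝ ℤ →ₐ[ℝ] DualNumber ℝ :=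
  AddMonoidAlgebra.lift ℝ (DualNumber ℝ) ℤ momentHom

lemma snd_moments (f : AddMonoidAlgebra ℝ ℤ) :
    (moments f).snd = ∑ t ∈ f.coeff.support, (t : ℝ) * f.coeff t := by
  rw [moments, AddMonoidAlgebra.lift_apply, Finsupp.sum, TrivSqZeroExt.snd_sum]
  refine sum_congr rfl fun t _ => ?_
  simp [momentHom, mul_comm]

lemma moments_single (t : ℤ) (c : ℝ) :
    moments (single t c) = c • (1 + (t : ℝ) • DualNumber.eps) := by
  rw [moments, lift_single]
  rfl

lemma moments_unifPMF_Ico (s : ℤ) {n : ℕ} (hn : 0 < n) :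
    moments (unifPMF (Ico s (s + n))) = 1 + ((s : ℝ) + ((n : ℝ) - 1) / 2) • DualNumber.eps := by
  have hn' : (n : ℝ) ≠ 0 := by positivity
  have hgauss : (∑ j ∈ range n, (j : ℝ)) * 2 = n * (n - 1) := by
    have h := congrArg (Nat.cast : ℕ → ℝ) (sum_range_id_mul_two n)
    push_cast [Nat.cast_pred hn] at h
    exact h
  rw [unifPMF_Ico_eq_uniformAP, uniformAP, map_sum]
  ext
  · simp only [moments_single, TrivSqZeroExt.fst_sum, TrivSqZeroExt.fst_smul,
      TrivSqZeroExt.fst_add, TrivSqZeroExt.fst_one, DualNumber.fst_eps, smul_eq_mul, mul_zero,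
      add_zero, mul_one, sum_const, card_range, nsmul_eq_mul]
    exact mul_inv_cancel₀ hn'
  · simp only [moments_single, Int.cast_add, Int.cast_natCast, smul_add, sum_add_distrib,
      sum_const, card_range, nsmul_eq_mul, Algebra.mul_smul_comm, TrivSqZeroExt.snd_add,
      TrivSqZeroExt.snd_smul, TrivSqZeroExt.snd_natCast, TrivSqZeroExt.snd_sum,
      TrivSqZeroExt.snd_one, DualNumber.snd_eps, smul_eq_mul, mul_one, mul_zero, zero_add,
      ← mul_sum]
    field_simp
    linear_combination hgauss

lemma l1Norm_unifPMF_le (S : Finset ℤ) : l1Norm (unifPMF S) ≤ 1 := by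
  refine (l1Norm_sum_le _ _).trans ?_
  simp only [l1Norm_single, abs_inv, Nat.abs_cast, sum_const, nsmul_eq_mul]
  exact mul_inv_le_one

lemma l1Norm_one_sub_unifPMF_mul_le {S : Finset ℤ} (hS : S.Nonempty) {f : AddMonoidAlgebra ℝ ℤ}
    {K : ℝ} (hK : ∀ r ∈ S, l1Norm ((1 - single r 1) * f) ≤ K) :
    l1Norm ((1 - unifPMF S) * f) ≤ K :=
  l1Norm_one_sub_sum_single_mul_le (fun _ _ => by positivity)
    (by simp [hS.card_pos.ne']) hK

section Estimates

variable {d H a b : ℕ}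

lemma l1Norm_one_sub_single_mul_pushPMF_le (hd : 1 ≤ d) (hH : 0 < H) (hcop : Nat.Coprime a b)
    (ha : 0 < a) (hab : a ≤ b) {r : ℤ} (hr : |r| ≤ (b : ℤ) ^ (d - 1)) :
    l1Norm ((1 - single r 1) * pushPMF d H a b) ≤ d * (a + b) / H := by
  obtain ⟨e, rfl⟩ : ∃ e, d = e + 1 := ⟨d - 1, by omega⟩
  simp only [Nat.add_sub_cancel] at hr ⊢
  set w : ℕ → ℤ := fun k => (a : ℤ) ^ (e - k) * (b : ℤ) ^ k
  have hP : pushPMF (e + 1) H a b = ∏ k ∈ range (e + 1), uniformAP (-H * w k) (w k) (2 * H) := by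
    simpa using pushPMF_eq_prod_uniformAP (e + 1) H a b
  have hshift (k : ℕ) (hk : k ∈ range (e + 1)) :
      l1Norm ((1 - single (w k) 1) * pushPMF (e + 1) H a b) ≤ 1 / H := by
    rw [hP]
    refine (l1Norm_mul_prod_le hk _ (fun i _ => l1Norm_uniformAP_le _ _ _) _).trans ?_
    refine (l1Norm_one_sub_single_mul_uniformAP_le _ _ _).trans_eq ?_
    push_cast
    field_simp
  obtain ⟨δ, hrδ, hδ⟩ := exists_sum_mul_pow_mul_pow (Nat.isCoprime_iff_coprime.mpr hcop)
    (by exact_mod_cast ha) (by exact_mod_cast hab) e 1 r (by simpa using hr)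
  have hsingle : single r (1 : ℝ) = ∏ k ∈ range (e + 1), single (δ k • w k) 1 := by
    rw [prod_single, prod_const_one, hrδ]
    rfl
  have hδR : ∑ k ∈ range (e + 1), |(δ k : ℝ)| ≤ (e + 1) * (a + b) := by
    have hδZ : ∑ k ∈ range (e + 1), |δ k| ≤ (e + 1) * (a + b) := by nlinarith
    exact_mod_cast hδZ
  rw [hsingle]
  calc l1Norm ((1 - ∏ k ∈ range (e + 1), single (δ k • w k) 1) * pushPMF (e + 1) H a b)
      ≤ ∑ k ∈ range (e + 1), l1Norm ((1 - single (δ k • w k) 1) * pushPMF (e + 1) H a b) :=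
        l1Norm_one_sub_prod_mul_le _ _ (fun _ _ => by rw [l1Norm_single, abs_one]) _
    _ ≤ ∑ k ∈ range (e + 1), |(δ k : ℝ)| * (1 / H) := sum_le_sum fun k hk =>
        (l1Norm_one_sub_single_zsmul_mul_le _ _ _).trans
          (by rw [Int.cast_abs]; gcongr; exact hshift k hk)
    _ ≤ (e + 1 : ℕ) * (a + b) / H := by
        rw [← sum_mul, mul_one_div]
        push_cast
        gcongr

noncomputable def unifConvPMF (d H a b : ℕ) : AddMonoidAlgebra ℝ ℤ :=
  ∏ i ∈ range d, unifPMF (Ico (-(H : ℤ) * (a ^ i * b ^ (d - 1 - i)))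
    (-(H : ℤ) * (a ^ i * b ^ (d - 1 - i)) + 2 * H * a ^ i * b ^ (d - 1 - i)))

lemma unifConvPMF_eq_prod (d H a b : ℕ) :
    unifConvPMF d H a b = ∏ i ∈ range d,
      unifPMF (Ico 0 (a ^ (d - 1 - i) * b ^ i : ℕ)) *
        uniformAP (-H * ((a : ℤ) ^ (d - 1 - i) * b ^ i)) ((a : ℤ) ^ (d - 1 - i) * b ^ i)
          (2 * H) := by
  rw [unifConvPMF, ← prod_range_reflect]
  refine prod_congr rfl fun i hi => ?_
  rw [Nat.sub_sub_self (by simp at hi; omega)]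
  convert unifPMF_Ico_mul_eq (-H) (a ^ (d - 1 - i) * b ^ i) (2 * H) using 3 <;> push_cast <;> ring

lemma l1Norm_pushPMF_sub_unifConvPMF_le (hd : 1 ≤ d) (hH : 0 < H) (hcop : Nat.Coprime a b)
    (ha : 0 < a) (hab : a ≤ b) :
    l1Norm (pushPMF d H a b - unifConvPMF d H a b) ≤ d ^ 2 * (a + b) / H := by
  have hb : 0 < b := ha.trans_le hab
  have hweight (i : ℕ) (hi : i < d) : a ^ (d - 1 - i) * b ^ i ≤ b ^ (d - 1) := by
    calc a ^ (d - 1 - i) * b ^ i ≤ b ^ (d - 1 - i) * b ^ i := by gcongr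
      _ = b ^ (d - 1) := by rw [← pow_add, Nat.sub_add_cancel (by omega)]
  rw [unifConvPMF_eq_prod, prod_mul_distrib, ← pushPMF_eq_prod_uniformAP, ← one_sub_mul]
  calc l1Norm ((1 - ∏ i ∈ range d, unifPMF (Ico 0 (a ^ (d - 1 - i) * b ^ i : ℕ)))
        * pushPMF d H a b)
      ≤ ∑ i ∈ range d, l1Norm ((1 - unifPMF (Ico 0 (a ^ (d - 1 - i) * b ^ i : ℕ)))
        * pushPMF d H a b) := l1Norm_one_sub_prod_mul_le _ _ (fun _ _ => l1Norm_unifPMF_le _) _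
    _ ≤ ∑ i ∈ range d, (d * (a + b) / H : ℝ) := by
        refine sum_le_sum fun i hi => l1Norm_one_sub_unifPMF_mul_le ?_ fun r hr => ?_
        · simp only [nonempty_Ico]
          positivity
        · refine l1Norm_one_sub_single_mul_pushPMF_le hd hH hcop ha hab ?_
          rw [mem_Ico] at hr
          rw [abs_of_nonneg hr.1]
          exact_mod_cast hr.2.le.trans (by exact_mod_cast hweight i (by simpa using hi))
    _ = d ^ 2 * (a + b) / H := by
        rw [sum_const, card_range, nsmul_eq_mul]
        ring

lemma snd_moments_unifConvPMF (d : ℕ) (hH : 0 < H) (ha : 0 < a) (hb : 0 < b) :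
    (moments (unifConvPMF d H a b)).snd = -(d / 2) := by
  have hfactor (i : ℕ) : moments (unifPMF (Ico (-(H : ℤ) * (a ^ i * b ^ (d - 1 - i)))
      (-(H : ℤ) * (a ^ i * b ^ (d - 1 - i)) + 2 * H * a ^ i * b ^ (d - 1 - i))))
      = 1 + (-1 / 2 : ℝ) • DualNumber.eps := by
    have hlen : (2 * H * a ^ i * b ^ (d - 1 - i) : ℤ) = (2 * H * a ^ i * b ^ (d - 1 - i) : ℕ) := by
      push_cast
      rfl
    rw [hlen, moments_unifPMF_Ico _ (by positivity)]
    push_cast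
    congr 2
    ring
  rw [unifConvPMF, map_prod, prod_congr rfl fun i _ => hfactor i, prod_const, card_range,
    TrivSqZeroExt.snd_pow]
  simp only [TrivSqZeroExt.fst_add, TrivSqZeroExt.fst_one, TrivSqZeroExt.fst_smul,
    DualNumber.fst_eps, TrivSqZeroExt.snd_add, TrivSqZeroExt.snd_one, TrivSqZeroExt.snd_smul,
    DualNumber.snd_eps, smul_eq_mul, mul_zero, add_zero, zero_add, mul_one, one_pow, nsmul_eq_mul]
  ring

theorem stmt8 : ∃ C : ℝ, 0 < C ∧
    ∀ (d : ℕ), 1 ≤ d → ∀ (H : ℤ), 1 ≤ H → ∀ a b : ℤ,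
      Int.gcd a b = 1 → 1 ≤ a → a < b →
      ∃ (k : ℕ → ℤ) (ϑ : AddMonoidAlgebra ℝ ℤ),
        -- ϑ is the convolution over i = 0, …, d-1 of uniform pmfs on sets of
        -- 2H a^i b^(d-1-i) consecutive integers
        ϑ = ∏ i ∈ Finset.range d,
              unifPMF (Finset.Ico (k i) (k i + 2 * H * a ^ i * b ^ (d - 1 - i))) ∧
        (∑ t ∈ (pushPMF d H a b - ϑ).coeff.support, |(pushPMF d H a b - ϑ).coeff t|)
          ≤ C * (d : ℝ) ^ 2 * ((a : ℝ) + (b : ℝ)) / (H : ℝ) ∧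
        |∑ t ∈ ϑ.coeff.support, (t : ℝ) * ϑ.coeff t|
          ≤ ∑ i ∈ Finset.range d, (a : ℝ) ^ i * (b : ℝ) ^ (d - 1 - i) := by
  refine ⟨1, one_pos, fun d hd H hH a b hgcd ha hab => ?_⟩
  lift H to ℕ using by omega
  lift a to ℕ using by omega
  lift b to ℕ using by omega
  refine ⟨fun i => -(H : ℤ) * (a ^ i * b ^ (d - 1 - i)), unifConvPMF d H a b, rfl, ?_, ?_⟩
  · have h := l1Norm_pushPMF_sub_unifConvPMF_le (H := H) hd (by omega) (by simpa using hgcd)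
      (by omega) (by omega)
    push_cast
    rwa [one_mul]
  · rw [← snd_moments, snd_moments_unifConvPMF d (by omega) (by omega) (by omega), abs_neg,
      abs_of_nonneg (by positivity)]
    calc (d / 2 : ℝ) ≤ ∑ _i ∈ range d, 1 := by simp
      _ ≤ _ := sum_le_sum fun i _ => one_le_mul_of_one_le_of_one_le
          (one_le_pow₀ (by exact_mod_cast ha)) (one_le_pow₀ (by norm_cast; omega))
end Estimates
end

section
/- There is an absolute constant C such that for every prime r, every m ∈ 𝔽_r, every nonzero i ∈ 𝔽_r, and every integer D ≥ 1, the number a_{D,i} of monic irreducible polynomials g ∈ 𝔽_r[X] of degree D with g(m) = i satisfies |a_{D,i} − (r^D − 1)/(D(r − 1))| ≤ C · r^{D/2}. -/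
/-!
If `α ∈ 𝔽_{q^D}` generates the extension and `g` is its minimal polynomial, then `g` is
the characteristic polynomial of multiplication by `α`, so `g(m) = N(m - α)`. Hence
`D · a_{D,i}` counts the generators `α` with `N(m - α) = i`. The norm `𝔽_{q^D}ˣ → 𝔽_qˣ` is a
surjective homomorphism, so exactly `(q^D - 1)/(q - 1)` elements `x` have `N(x) = i`; the
elements that are not generators lie in proper subfields `𝔽_{q^d}`, `d ∣ D`, which contain at
most `2 q^{D/2}` elements altogether.
-/

open Polynomial Module Finset

theorem PowerBasis.eval_minpoly_gen {R S : Type*} [CommRing R] [CommRing S] [Algebra R S]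
    (pb : PowerBasis R S) (t : R) :
    (minpoly R pb.gen).eval t = Algebra.norm R (algebraMap R S t - pb.gen) := by
  rw [← charpoly_leftMulMatrix, Matrix.eval_charpoly, Algebra.norm_eq_matrix_det pb.basis,
    map_sub, AlgHom.commutes, Matrix.algebraMap_eq_diagonal]
  rfl

theorem minpoly.eval_eq_norm_sub {F K : Type*} [Field F] [Field K] [Algebra F K]
    [FiniteDimensional F K] {α : K} (hα : (minpoly F α).natDegree = finrank F K) (t : F) :
    (minpoly F α).eval t = Algebra.norm F (algebraMap F K t - α) := by
  have hint : IsIntegral F α := .of_finite F α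
  have htop : Algebra.adjoin F {α} = ⊤ :=
    (IntermediateField.adjoin_simple_eq_top_iff_of_isAlgebraic hint.isAlgebraic).1
      ((Field.primitive_element_iff_minpoly_natDegree_eq F α).2 hα)
  simpa using (PowerBasis.ofAdjoinEqTop hint htop).eval_minpoly_gen t

theorem Nat.le_div_two_of_dvd_of_lt {d n : ℕ} (hdvd : d ∣ n) (hlt : d < n) : d ≤ n / 2 := by
  obtain ⟨c, rfl⟩ := hdvd
  rcases Nat.lt_or_ge c 2 with hc | hc
  · interval_cases c <;> simp at hlt
  · rw [Nat.le_div_iff_mul_le two_pos]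
    exact Nat.mul_le_mul_left d hc

theorem Nat.sum_range_succ_pow_le_two_mul {q : ℕ} (hq : 2 ≤ q) (e : ℕ) :
    ∑ d ∈ range (e + 1), q ^ d ≤ 2 * q ^ e := by
  have := Nat.geomSum_lt hq (s := range e) fun _ => Finset.mem_range.1
  rw [sum_range_succ]
  omega

theorem card_filter_pow_eq_self_le {K : Type*} [Field K] [Fintype K] [DecidableEq K] {n : ℕ}
    (hn : 1 < n) : #{x : K | x ^ n = x} ≤ n := by
  have hne : (X ^ n - X : K[X]) ≠ 0 := FiniteField.X_pow_card_sub_X_ne_zero K hn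
  calc #{x : K | x ^ n = x} ≤ (X ^ n - X : K[X]).roots.toFinset.card := by
        refine card_le_card fun x hx => ?_
        simp_all [sub_eq_zero]
    _ ≤ (X ^ n - X : K[X]).natDegree := (Multiset.toFinset_card_le _).trans (card_roots' _)
    _ = n := FiniteField.X_pow_card_sub_X_natDegree_eq K hn

namespace FiniteField

variable {F K : Type*} [Field F] [Fintype F] [Field K] [Fintype K] [Algebra F K]

theorem card_minpoly_eq [DecidableEq F[X]] {g : F[X]} (hmo : g.Monic) (hirr : Irreducible g)
    (hdeg : g.natDegree = finrank F K) :
    #{α : K | minpoly F α = g} = finrank F K := by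
  have hdvd : g ∣ X ^ Fintype.card K - X := by
    rw [card_eq_pow_finrank (K := F), ← Nat.card_eq_fintype_card,
      ← hirr.natDegree_dvd_iff_dvd_X_pow_card_pow_sub_X, hdeg]
  have hsplit : Splits (g.map (algebraMap F K)) :=
    (isSplittingField_sub K F).splits.of_dvd
      (Polynomial.map_ne_zero (X_pow_card_sub_X_ne_zero F Fintype.one_lt_card))
      (Polynomial.map_dvd (algebraMap F K) hdvd)
  have hroots : ({α : K | minpoly F α = g} : Finset K) = (g.rootSet K).toFinset := by
    ext α
    simp only [mem_filter, mem_univ, true_and, Set.mem_toFinset,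
      mem_rootSet_of_ne hmo.ne_zero]
    exact ⟨fun h => h ▸ minpoly.aeval F α,
      fun h => (minpoly.eq_of_irreducible_of_monic hirr h hmo).symm⟩
  rw [hroots, Set.toFinset_card,
    card_rootSet_eq_natDegree (PerfectField.separable_of_irreducible hirr) hsplit, hdeg]

theorem card_minpoly_mem [DecidableEq F[X]] (S : Set F[X]) [DecidablePred (· ∈ S)]
    (hS : ∀ g ∈ S, g.Monic ∧ Irreducible g ∧ g.natDegree = finrank F K) :
    #{α : K | minpoly F α ∈ S} = S.ncard * finrank F K := by
  set T : Finset K := {α : K | minpoly F α ∈ S}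
  have himage : (T.image (minpoly F) : Set F[X]) = S := by
    ext g
    simp only [coe_image, Set.mem_image, mem_coe, T, mem_filter, mem_univ, true_and]
    refine ⟨fun ⟨α, hα, hαg⟩ => hαg ▸ hα, fun hg => ?_⟩
    obtain ⟨hmo, hirr, hdeg⟩ := hS g hg
    obtain ⟨α, hα⟩ :=
      card_pos.1 ((card_minpoly_eq (K := K) hmo hirr hdeg).symm ▸ finrank_pos)
    exact ⟨α, (mem_filter.1 hα).2 ▸ hg, (mem_filter.1 hα).2⟩
  have hfiber : ∀ g ∈ T.image (minpoly F), #{α ∈ T | minpoly F α = g} = finrank F K := by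
    intro g hg
    have hgS : g ∈ S := himage ▸ mem_coe.2 hg
    obtain ⟨hmo, hirr, hdeg⟩ := hS g hgS
    rw [← card_minpoly_eq hmo hirr hdeg, filter_filter]
    congr 1
    exact filter_congr fun α _ => ⟨And.right, fun h => ⟨h ▸ hgS, h⟩⟩
  rw [card_eq_sum_card_image (minpoly F) T, sum_congr rfl hfiber, sum_const, smul_eq_mul,
    ← himage, Set.ncard_coe_finset]

theorem card_norm_eq [DecidableEq F] {c : F} (hc : c ≠ 0) :
    #{x : K | Algebra.norm F x = c} = (Fintype.card K - 1) / (Fintype.card F - 1) := by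
  set N : Kˣ →* Fˣ := Units.map (Algebra.norm F (S := K))
  have hN : Function.Surjective N := unitsMap_norm_surjective F K
  have hfiber : {x : K // Algebra.norm F x = c} ≃ N ⁻¹' {Units.mk0 c hc} :=
    { toFun x := ⟨Units.mk0 x.1 fun h => hc (by rw [← x.2, h, Algebra.norm_zero]),
        Units.ext x.2⟩
      invFun u := ⟨u.1, congrArg Units.val u.2⟩
      left_inv _ := rfl
      right_inv _ := Subtype.ext (Units.ext rfl) }
  have hker : Nat.card N.ker * Nat.card Fˣ = Nat.card Kˣ := by
    rw [← Subgroup.card_top (G := Fˣ), ← N.range_eq_top.2 hN, ← Subgroup.index_ker,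
      Subgroup.card_mul_index]
  rw [← Fintype.card_subtype, ← Nat.card_eq_fintype_card, Nat.card_congr hfiber,
    Nat.card_congr (MonoidHom.fiberEquivKerOfSurjective hN _)]
  simp only [Nat.card_units, Nat.card_eq_fintype_card (α := F),
    Nat.card_eq_fintype_card (α := K)] at hker
  rw [← hker, Nat.mul_div_cancel _ (Nat.sub_pos_of_lt Fintype.one_lt_card)]

theorem pow_card_pow_natDegree_minpoly (α : K) :
    α ^ Fintype.card F ^ (minpoly F α).natDegree = α := by
  have hirr := minpoly.irreducible (IsIntegral.of_finite F α)
  have hdvd := (hirr.natDegree_dvd_iff_dvd_X_pow_card_pow_sub_X (n := (minpoly F α).natDegree)).1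
    dvd_rfl
  have hroot := aeval_eq_zero_of_dvd_aeval_eq_zero hdvd (minpoly.aeval F α)
  simpa [sub_eq_zero, Nat.card_eq_fintype_card] using hroot

theorem card_natDegree_minpoly_ne_finrank_le [DecidableEq K] :
    #{α : K | (minpoly F α).natDegree ≠ finrank F K} ≤
      2 * Fintype.card F ^ (finrank F K / 2) := by
  set q := Fintype.card F
  set D := finrank F K
  have hq : 1 < q := Fintype.one_lt_card
  have hsub : ({α : K | (minpoly F α).natDegree ≠ D} : Finset K) ⊆
      (Icc 1 (D / 2)).biUnion fun d => {x : K | x ^ q ^ d = x} := by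
    intro α hα
    have hint : IsIntegral F α := .of_finite F α
    refine mem_biUnion.2 ⟨(minpoly F α).natDegree, mem_Icc.2 ⟨minpoly.natDegree_pos hint,
      Nat.le_div_two_of_dvd_of_lt (minpoly.degree_dvd hint)
        ((minpoly.natDegree_le α).lt_of_ne (mem_filter.1 hα).2)⟩, ?_⟩
    exact mem_filter.2 ⟨mem_univ _, pow_card_pow_natDegree_minpoly α⟩
  calc _ ≤ _ := card_le_card hsub
    _ ≤ ∑ d ∈ Icc 1 (D / 2), #{x : K | x ^ q ^ d = x} := card_biUnion_le
    _ ≤ ∑ d ∈ Icc 1 (D / 2), q ^ d := sum_le_sum fun d hd =>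
        card_filter_pow_eq_self_le (Nat.one_lt_pow (Nat.one_le_iff_ne_zero.1 (mem_Icc.1 hd).1) hq)
    _ ≤ ∑ d ∈ range (D / 2 + 1), q ^ d :=
        sum_le_sum_of_subset fun d hd => mem_range.2 (Nat.lt_succ_of_le (mem_Icc.1 hd).2)
    _ ≤ 2 * q ^ (D / 2) := Nat.sum_range_succ_pow_le_two_mul hq _

theorem card_norm_sub_eq [DecidableEq F] (t : F) {c : F} (hc : c ≠ 0) :
    #{α : K | Algebra.norm F (algebraMap F K t - α) = c} =
      (Fintype.card K - 1) / (Fintype.card F - 1) := by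
  rw [← card_norm_eq hc]
  exact card_equiv (Equiv.subLeft (algebraMap F K t)) (by simp)

theorem ncard_monic_irreducible_eval_eq_mul_finrank [DecidableEq F] [DecidableEq K] (t c : F) :
    {g : F[X] | g.Monic ∧ Irreducible g ∧ g.natDegree = finrank F K ∧ g.eval t = c}.ncard *
        finrank F K =
      #{α : K | (minpoly F α).natDegree = finrank F K ∧
        Algebra.norm F (algebraMap F K t - α) = c} := by
  classical
  rw [← card_minpoly_mem _ fun g hg => ⟨hg.1, hg.2.1, hg.2.2.1⟩]
  congr 1
  refine filter_congr fun α _ => ?_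
  have hint : IsIntegral F α := .of_finite F α
  simp only [Set.mem_ofPred_eq, minpoly.monic hint, minpoly.irreducible hint, true_and]
  exact and_congr_right fun hdeg => by rw [minpoly.eval_eq_norm_sub hdeg t]

theorem ncard_monic_irreducible_eval_eq_mul_finrank_le (t : F) {c : F} (hc : c ≠ 0) :
    {g : F[X] | g.Monic ∧ Irreducible g ∧ g.natDegree = finrank F K ∧ g.eval t = c}.ncard *
      finrank F K ≤ (Fintype.card K - 1) / (Fintype.card F - 1) := by
  classical
  rw [ncard_monic_irreducible_eval_eq_mul_finrank, ← card_norm_sub_eq t hc]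
  exact card_le_card (monotone_filter_right _ fun _ _ => And.right)

theorem le_ncard_monic_irreducible_eval_eq_mul_finrank_add (t : F) {c : F} (hc : c ≠ 0) :
    (Fintype.card K - 1) / (Fintype.card F - 1) ≤
      {g : F[X] | g.Monic ∧ Irreducible g ∧ g.natDegree = finrank F K ∧ g.eval t = c}.ncard *
        finrank F K + 2 * Fintype.card F ^ (finrank F K / 2) := by
  classical
  rw [ncard_monic_irreducible_eval_eq_mul_finrank, ← card_norm_sub_eq (K := K) t hc]
  set D := finrank F K
  calc _ ≤ #(({α : K | (minpoly F α).natDegree = D ∧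
          Algebra.norm F (algebraMap F K t - α) = c} : Finset K) ∪
        ({α : K | (minpoly F α).natDegree ≠ D} : Finset K)) := card_le_card fun α hα => by
          by_cases hdeg : (minpoly F α).natDegree = D
          · exact mem_union_left _ (mem_filter.2 ⟨mem_univ _, hdeg, (mem_filter.1 hα).2⟩)
          · exact mem_union_right _ (mem_filter.2 ⟨mem_univ _, hdeg⟩)
    _ ≤ _ := (card_union_le _ _).trans
        (Nat.add_le_add_left card_natDegree_minpoly_ne_finrank_le _)

end FiniteField

theorem abs_sub_div_le_of_mul_le {a k e D : ℝ} (hD : 1 ≤ D) (h₁ : a * D ≤ k)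
    (h₂ : k ≤ a * D + e) : |a - k / D| ≤ e := by
  have hD0 : 0 < D := one_pos.trans_le hD
  rw [abs_sub_comm, abs_of_nonneg (by rw [sub_nonneg, le_div_iff₀ hD0]; exact h₁),
    div_sub' hD0.ne', div_le_iff₀ hD0]
  nlinarith

theorem Nat.cast_pow_sub_one_div_sub_one {r D : ℕ} (hr : 2 ≤ r) :
    (((r ^ D - 1) / (r - 1) : ℕ) : ℝ) = ((r : ℝ) ^ D - 1) / (r - 1) := by
  rw [Nat.cast_div (by simpa using Nat.sub_dvd_pow_sub_pow r 1 D) (by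
      rw [Nat.cast_ne_zero]; omega), Nat.cast_sub (Nat.one_le_pow _ _ (by omega)),
    Nat.cast_sub (by omega)]
  push_cast; ring

theorem stmt12 : ∃ C : ℝ, 0 < C ∧
    ∀ r : ℕ, r.Prime → ∀ m i : ZMod r, i ≠ 0 → ∀ D : ℕ, 1 ≤ D →
      |({g : Polynomial (ZMod r) | g.Monic ∧ Irreducible g ∧ g.natDegree = D ∧
            Polynomial.eval m g = i}.ncard : ℝ) -
          ((r : ℝ) ^ D - 1) / ((D : ℝ) * ((r : ℝ) - 1))|
        ≤ C * (r : ℝ) ^ ((D : ℝ) / 2) := by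
  refine ⟨2, two_pos, fun r hr m i hi D hD => ?_⟩
  have : Fact r.Prime := ⟨hr⟩
  have hD0 : D ≠ 0 := by omega
  let _ : Fintype (GaloisField r D) := .ofFinite _
  have hle :=
    FiniteField.ncard_monic_irreducible_eval_eq_mul_finrank_le (K := GaloisField r D) m hi
  have hge :=
    FiniteField.le_ncard_monic_irreducible_eval_eq_mul_finrank_add (K := GaloisField r D) m hi
  rw [GaloisField.finrank r hD0, Fintype.card_eq_nat_card, GaloisField.card r D hD0,
    ZMod.card] at hle hge
  have hpow : (r : ℝ) ^ (D / 2) ≤ (r : ℝ) ^ ((D : ℝ) / 2) := by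
    rw [← Real.rpow_natCast]
    exact Real.rpow_le_rpow_of_exponent_le (by exact_mod_cast hr.one_le) Nat.cast_div_le
  rw [mul_comm (D : ℝ), ← div_div, ← Nat.cast_pow_sub_one_div_sub_one hr.two_le]
  refine (abs_sub_div_le_of_mul_le (e := 2 * (r : ℝ) ^ (D / 2)) (by exact_mod_cast hD)
    (by exact_mod_cast hle) (by exact_mod_cast hge)).trans ?_
  gcongr
end

section
/- Let K be a subfield of a fixed algebraic closure of ℚ with [K : ℚ] = d finite, let h ∈ K, let α be an element of this algebraic closure with α² = h, and let L = K(α). Then the normal closure L' of L over ℚ (inside the algebraic closure) satisfies [L' : ℚ] ≤ 2^d · d!. -/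
/-!
Every conjugate `σ L` of `L = K(α)` is generated by `σ K` and `σ α`. All `σ K` lie in the normal
closure `N` of `K`, of degree at most `d!`: its Galois group permutes the `d` conjugates of a
primitive element. Moreover `σ α` is a square root of `τ h` for the embedding `τ = σ|_K`, so it is
`± r τ` for a square root `r τ` chosen once for each of the `d` embeddings `τ`. Hence the normal
closure of `L` lies in `N(r τ : τ)`, of degree at most `2 ^ d` over `N`.
-/

open Polynomial IntermediateField Module Nat

theorem Polynomial.finrank_splittingField_le_factorial {F : Type*} [Field F] {p : F[X]}
    (hp : p.Separable) : finrank F p.SplittingField ≤ p.natDegree ! := by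
  have : Fact ((p.map (algebraMap F p.SplittingField)).Splits) := ⟨SplittingField.splits p⟩
  calc finrank F p.SplittingField = Nat.card p.Gal := (Gal.card_of_separable hp).symm
    _ ≤ Nat.card (Equiv.Perm (p.rootSet p.SplittingField)) :=
        Nat.card_le_card_of_injective _ (Gal.galActionHom_injective p _)
    _ = (Fintype.card (p.rootSet p.SplittingField))! := by
        rw [Nat.card_perm, Nat.card_eq_fintype_card]
    _ = p.natDegree ! := by rw [card_rootSet_eq_natDegree hp (SplittingField.splits p)]

theorem finrank_normalClosure_le_factorial (F K Ω : Type*) [Field F] [Field K] [Field Ω]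
    [Algebra F K] [Algebra F Ω] [FiniteDimensional F K] [Algebra.IsSeparable F K] [IsAlgClosed Ω] :
    finrank F (normalClosure F K Ω) ≤ (finrank F K)! := by
  obtain ⟨θ, hθ⟩ := Field.exists_primitive_element F K
  have hθ_int : IsIntegral F θ := .of_finite F θ
  set p := minpoly F θ
  have hsplit : IsSplittingField F (adjoin F (p.rootSet Ω)) p :=
    adjoin_rootSet_isSplittingField (IsAlgClosed.splits _)
  have : FiniteDimensional F (adjoin F (p.rootSet Ω)) := hsplit.finiteDimensional _ p
  have hle : normalClosure F K Ω ≤ adjoin F (p.rootSet Ω) := by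
    refine normalClosure_le_iff.mpr fun τ ↦ ?_
    rw [τ.fieldRange_eq_map, ← hθ, adjoin_map, Set.image_singleton]
    refine adjoin.mono _ _ _ (Set.singleton_subset_iff.mpr ?_)
    rw [mem_rootSet, aeval_algHom_apply, minpoly.aeval, map_zero]
    exact ⟨minpoly.ne_zero hθ_int, rfl⟩
  calc finrank F (normalClosure F K Ω) ≤ finrank F (adjoin F (p.rootSet Ω)) :=
        finrank_le_of_le_right hle
    _ = finrank F p.SplittingField := (IsSplittingField.algEquiv _ p).toLinearEquiv.finrank_eq
    _ ≤ p.natDegree ! :=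
        finrank_splittingField_le_factorial (Algebra.IsSeparable.isSeparable F θ)
    _ = (finrank F K)! := by rw [← adjoin.finrank hθ_int, hθ, finrank_top']

theorem IntermediateField.finrank_adjoin_simple_le_of_pow_mem {F E : Type*} [Field F] [Field E]
    [Algebra F E] {x : E} {n : ℕ} (hn : n ≠ 0) (hx : x ^ n ∈ Set.range (algebraMap F E)) :
    finrank F F⟮x⟯ ≤ n := by
  obtain ⟨c, hc⟩ := hx
  have hroot : aeval x (X ^ n - C c) = 0 := by simp [hc]
  have hint : IsIntegral F x := ⟨X ^ n - C c, monic_X_pow_sub_C c hn, by simpa using hroot⟩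
  rw [adjoin.finrank hint, ← natDegree_X_pow_sub_C (n := n) (r := c)]
  exact natDegree_le_natDegree (minpoly.min F x (monic_X_pow_sub_C c hn) hroot)

theorem IntermediateField.finrank_adjoin_range_le_prod {F E ι : Type*} [Field F] [Field E]
    [Algebra F E] [Fintype ι] (r : ι → E) :
    finrank F (adjoin F (Set.range r)) ≤ ∏ i, finrank F F⟮r i⟯ := by
  classical
  suffices ∀ s : Finset ι, finrank F (adjoin F (r '' (s : Set ι))) ≤ ∏ i ∈ s, finrank F F⟮r i⟯ by
    rw [← Set.image_univ, ← Finset.coe_univ]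
    exact this Finset.univ
  intro s
  induction s using Finset.induction with
  | empty =>
    rw [Finset.coe_empty, Set.image_empty, adjoin_empty, IntermediateField.finrank_bot,
      Finset.prod_empty]
  | insert a s ha ih =>
    rw [Finset.coe_insert, Set.image_insert_eq, Set.insert_eq, adjoin_union,
      Finset.prod_insert ha]
    exact (finrank_sup_le _ _).trans (Nat.mul_le_mul_left _ ih)

theorem normalClosure_sup_adjoin_sqrt_le {F Ω : Type*} [Field F] [Field Ω] [Algebra F Ω]
    [Normal F Ω] (K : IntermediateField F Ω) {h α : Ω} (hh : h ∈ K) (hα : α ^ 2 = h)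
    (r : (K →ₐ[F] Ω) → Ω) (hr : ∀ τ, r τ ^ 2 = τ ⟨h, hh⟩) :
    normalClosure F ↥(K ⊔ F⟮α⟯) Ω ≤
      (adjoin (normalClosure F K Ω) (Set.range r)).restrictScalars F := by
  rw [normalClosure_def' (K ⊔ F⟮α⟯), restrictScalars_adjoin_eq_sup]
  refine iSup_le fun σ ↦ ?_
  rw [IntermediateField.map_sup, adjoin_map, Set.image_singleton]
  refine sup_le_sup ?_ (adjoin_simple_le_iff.mpr ?_)
  · rw [normalClosure_def' K]
    exact le_iSup (fun σ : Ω →ₐ[F] Ω ↦ K.map σ) σ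
  have hσα : σ α ^ 2 = r (σ.comp K.val) ^ 2 := by rw [hr, ← map_pow, hα]; rfl
  have hmem : r (σ.comp K.val) ∈ adjoin F (Set.range r) := subset_adjoin F _ ⟨_, rfl⟩
  rcases sq_eq_sq_iff_eq_or_eq_neg.mp hσα with hpos | hneg
  · exact hpos ▸ hmem
  · exact hneg ▸ neg_mem hmem

-- The `ℚ`-algebra structure in the statement is `DivisionRing.toRatAlgebra`, not the one
-- `AlgebraicClosure ℚ` is built with; the two agree since `Algebra ℚ _` is a subsingleton.
instance AlgebraicClosure.isAlgClosure_rat : IsAlgClosure ℚ (AlgebraicClosure ℚ) := by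
  convert AlgebraicClosure.instIsAlgClosure ℚ
  · rfl
  · exact Subsingleton.elim _ _

theorem stmt13 (K : IntermediateField ℚ (AlgebraicClosure ℚ))
    [FiniteDimensional ℚ K] (d : ℕ) (hd : d = Module.finrank ℚ K)
    (h α : AlgebraicClosure ℚ) (hh : h ∈ K) (hα : α ^ 2 = h) :
    Module.finrank ℚ
        (IntermediateField.normalClosure ℚ
          (↥(K ⊔ IntermediateField.adjoin ℚ {α}))
          (AlgebraicClosure ℚ))
      ≤ 2 ^ d * Nat.factorial d := by
  set N := normalClosure ℚ K (AlgebraicClosure ℚ)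
  choose r hr using fun τ : K →ₐ[ℚ] AlgebraicClosure ℚ ↦
    IsAlgClosed.exists_pow_nat_eq (τ ⟨h, hh⟩) two_pos
  set M := adjoin N (Set.range r)
  have : FiniteDimensional N M :=
    finiteDimensional_adjoin fun x _ ↦ (Algebra.IsIntegral.isIntegral (R := ℚ) x).tower_top
  have : FiniteDimensional ℚ (M.restrictScalars ℚ) :=
    (Module.Finite.trans N M : FiniteDimensional ℚ M)
  have hN : finrank ℚ N ≤ d ! := hd ▸ finrank_normalClosure_le_factorial ℚ K _
  have hM : finrank N M ≤ 2 ^ d := calc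
    finrank N M ≤ ∏ τ, finrank N N⟮r τ⟯ := finrank_adjoin_range_le_prod r
    _ ≤ ∏ _τ : K →ₐ[ℚ] AlgebraicClosure ℚ, 2 := Finset.prod_le_prod' fun τ _ ↦
        finrank_adjoin_simple_le_of_pow_mem two_ne_zero
          ⟨⟨_, τ.fieldRange_le_normalClosure ⟨_, rfl⟩⟩, (hr τ).symm⟩
    _ = 2 ^ d := by rw [Finset.prod_const, Finset.card_univ, AlgHom.card, hd]
  calc _ ≤ finrank ℚ (M.restrictScalars ℚ) :=
        finrank_le_of_le_right (normalClosure_sup_adjoin_sqrt_le K hh hα r hr)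
    _ = finrank ℚ N * finrank N M := (finrank_mul_finrank ℚ N M).symm
    _ ≤ d ! * 2 ^ d := Nat.mul_le_mul hN hM
    _ = 2 ^ d * d ! := Nat.mul_comm _ _
end

section
/- For a positive integer N, let P(N) denote the largest integer of the form ∏_{p prime, p ≤ k} p (over integers k ≥ 0, with the empty product equal to 1) that is at most N. Then for every positive integer x with x ≤ N, one has φ(x)/x ≥ φ(P(N))/P(N), where φ is Euler's totient function; that is, among all positive integers up to N, the ratio φ(x)/x is minimised at the largest primorial not exceeding N. -/
/-!
Write `P = primorial k`. If `x` had more than `π k` distinct prime factors, their product would be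
at least the primorial of the next prime after `k`, contradicting the maximality of `P`. Hence `x`
has at most as many prime factors as `P`, and since `1 - 1/p` increases with `p`, the primes up to
`k` give the smallest product `φ(n)/n = ∏_{p ∣ n} (1 - 1/p)`. Both comparisons are instances of
one exchange principle: if every factor of `∏_{s \ t} f` lies below `c` and every factor of
`∏_{t \ s} f` above it, then `∏_s f ≤ ∏_t f` as soon as `c ^ #(s \ t) ≤ c ^ #(t \ s)`.
-/

open Finset Nat
open scoped Nat.Prime

theorem Finset.prod_le_prod_of_sdiff_le_le_sdiff {ι R : Type*} [DecidableEq ι]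
    [CommSemiring R] [PartialOrder R] [IsOrderedRing R] {s t : Finset ι} {f : ι → R}
    (c : R) (hc₀ : 0 ≤ c)
    (hf : ∀ i ∈ s, 0 ≤ f i) (hs : ∀ i ∈ s \ t, f i ≤ c) (ht : ∀ i ∈ t \ s, c ≤ f i)
    (hc : c ^ #(s \ t) ≤ c ^ #(t \ s)) :
    ∏ i ∈ s, f i ≤ ∏ i ∈ t, f i := by
  have hst : ∏ i ∈ s \ t, f i ≤ ∏ i ∈ t \ s, f i :=
    calc ∏ i ∈ s \ t, f i ≤ ∏ _i ∈ s \ t, c :=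
          prod_le_prod (fun i hi => hf i (mem_sdiff.mp hi).1) hs
      _ = c ^ #(s \ t) := prod_const c
      _ ≤ c ^ #(t \ s) := hc
      _ = ∏ _i ∈ t \ s, c := (prod_const c).symm
      _ ≤ ∏ i ∈ t \ s, f i := prod_le_prod (fun _ _ => hc₀) ht
  rw [← prod_sdiff (inter_subset_left : s ∩ t ⊆ s), ← prod_sdiff (inter_subset_right : s ∩ t ⊆ t),
    sdiff_inter_self_left, sdiff_inter_self_right]
  exact mul_le_mul_of_nonneg_right hst (prod_nonneg fun i hi => hf i (mem_inter.mp hi).1)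

theorem Nat.cast_totient_div_self {n : ℕ} (hn : n ≠ 0) :
    (φ n : ℝ) / n = ∏ p ∈ n.primeFactors, (1 - (p : ℝ)⁻¹) := by
  have h : (φ n : ℝ) = n * ∏ p ∈ n.primeFactors, (1 - (p : ℝ)⁻¹) := by
    have := congrArg (Rat.cast : ℚ → ℝ) (totient_eq_mul_prod_factors n)
    push_cast at this
    exact this
  rw [h, mul_div_cancel_left₀ _ (cast_ne_zero.mpr hn)]

theorem Nat.primorial_le_prod_of_primeCounting_le {q : ℕ} {S : Finset ℕ}
    (hS : ∀ p ∈ S, p.Prime) (hcard : π q ≤ #S) : primorial q ≤ ∏ p ∈ S, p := by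
  refine prod_le_prod_of_sdiff_le_le_sdiff (q + 1) (zero_le _) (fun _ _ => zero_le _)
    (fun p hp => (le_of_mem_primesLE (mem_sdiff.mp hp).1).trans q.le_succ) (fun p hp => ?_) ?_
  · obtain ⟨hpS, hpq⟩ := mem_sdiff.mp hp
    exact not_le.mp fun h => hpq (mem_primesLE.mpr ⟨h, hS p hpS⟩)
  · exact pow_le_pow_right₀ q.succ_pos
      (card_sdiff_le_card_sdiff_iff.mpr ((primesLE_card_eq_primeCounting q).trans_le hcard))

theorem Nat.prod_primesLE_one_sub_inv_le {k : ℕ} {S : Finset ℕ}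
    (hS : ∀ p ∈ S, p.Prime) (hcard : #S ≤ π k) :
    ∏ p ∈ primesLE k, (1 - (p : ℝ)⁻¹) ≤ ∏ p ∈ S, (1 - (p : ℝ)⁻¹) := by
  have hc₀ : (0 : ℝ) ≤ 1 - ((k + 1 : ℕ) : ℝ)⁻¹ :=
    sub_nonneg.mpr (inv_le_one_of_one_le₀ (by exact_mod_cast k.succ_pos))
  refine prod_le_prod_of_sdiff_le_le_sdiff _ hc₀ (fun p hp => ?_) (fun p hp => ?_)
    (fun p hp => ?_) ?_
  · have : (1 : ℝ) ≤ p := by exact_mod_cast (prime_of_mem_primesLE hp).one_le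
    exact sub_nonneg.mpr (inv_le_one_of_one_le₀ this)
  · have hp := (mem_sdiff.mp hp).1
    have : (1 : ℝ) ≤ p := by exact_mod_cast (prime_of_mem_primesLE hp).one_le
    have : (p : ℝ) ≤ (k + 1 : ℕ) := by exact_mod_cast (le_of_mem_primesLE hp).trans k.le_succ
    gcongr
  · obtain ⟨hpS, hpk⟩ := mem_sdiff.mp hp
    have : k + 1 ≤ p := not_le.mp fun h => hpk (mem_primesLE.mpr ⟨h, hS p hpS⟩)
    gcongr
  · exact pow_le_pow_of_le_one hc₀ (sub_le_self _ (by positivity))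
      (card_sdiff_le_card_sdiff_iff.mpr (hcard.trans (primesLE_card_eq_primeCounting k).ge))

theorem Nat.card_primeFactors_le_primeCounting {x k : ℕ} (hx : x ≠ 0)
    (hmax : ∀ j, primorial j ≤ x → primorial j ≤ primorial k) : #x.primeFactors ≤ π k := by
  by_contra! h
  -- `q` is the first prime after `k`.
  set q := nth Nat.Prime (π k)
  have hq : q.Prime := prime_nth_prime _
  have hπq : π q = π k + 1 := by
    rw [primeCounting, primeCounting', count_succ, ← primeCounting', primeCounting'_nth_eq,
      if_pos hq]
  have hkq : k < q := lt_of_not_ge fun hqk => by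
    have := monotone_primeCounting hqk
    omega
  have hqx : primorial q ≤ x :=
    (primorial_le_prod_of_primeCounting_le (fun _ => prime_of_mem_primeFactors) (hπq ▸ h)).trans
      (le_of_dvd (pos_of_ne_zero hx) (prod_primeFactors_dvd x))
  have hqk : primorial q = primorial k := le_antisymm (hmax q hqx) (primorial_mono hkq.le)
  have := hq.dvd_primorial_iff.mp (hqk ▸ hq.dvd_primorial)
  omega

theorem stmt16_general (N : ℕ) (P : ℕ)
    (hprim : ∃ k : ℕ, P = primorial k)
    (hmax : ∀ P' : ℕ, (∃ k : ℕ, P' = primorial k) → P' ≤ N → P' ≤ P)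
    (x : ℕ) (hx0 : 0 < x) (hxN : x ≤ N) :
    (P.totient : ℝ) / (P : ℝ) ≤ (x.totient : ℝ) / (x : ℝ) := by
  obtain ⟨k, rfl⟩ := hprim
  have hcard : #x.primeFactors ≤ π k :=
    card_primeFactors_le_primeCounting hx0.ne' fun j hj => hmax _ ⟨j, rfl⟩ (hj.trans hxN)
  rw [cast_totient_div_self (primorial_ne_zero k), cast_totient_div_self hx0.ne',
    primeFactors_primorial]
  exact prod_primesLE_one_sub_inv_le (fun _ => prime_of_mem_primeFactors) hcard

theorem stmt16 (N : ℕ) (hN : 0 < N) (P : ℕ)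
    (hprim : ∃ k : ℕ, P = primorial k) (hle : P ≤ N)
    (hmax : ∀ P' : ℕ, (∃ k : ℕ, P' = primorial k) → P' ≤ N → P' ≤ P)
    (x : ℕ) (hx0 : 0 < x) (hxN : x ≤ N) :
    (P.totient : ℝ) / (P : ℝ) ≤ (x.totient : ℝ) / (x : ℝ) :=
  stmt16_general N P hprim hmax x hx0 hxN
end
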